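/- arXiv:2501.05334 — 9 statements merged into one kernel-verified Lean document; each statement's English description precedes it below -/
import Mathlib

section
/- For a fixed miller profile t, any baker profile s* that maximizes the potential Φ_t(s) = Σ_ℓ M_t(ℓ)·H_{B_s(ℓ)} over all feasible baker profiles is a baker equilibrium: no baker can strictly increase her utility by unilaterally moving to another feasible location. -/
open Finset

/-- Number of agents (bakers or millers) choosing location `ℓ`. -/
def cnt {A L : Type*} [Fintype A] [DecidableEq L] (f : A → L) (ℓ : L) : ℕ :=
  (Finset.univ.filter (fun a => f a = ℓ)).card

/-- Rosenthal potential `Φ_t(s) = Σ_ℓ M_t(ℓ) · H_{B_s(ℓ)}`, with `harmonic k` the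
`k`-th harmonic number. -/
def pot {L B M : Type*} [Fintype L] [Fintype B] [Fintype M] [DecidableEq L]
    (t : M → L) (s : B → L) : ℚ :=
  ∑ ℓ : L, (cnt t ℓ : ℚ) * harmonic (cnt s ℓ)

lemma cnt_self_pos {A L : Type*} [Fintype A] [DecidableEq L] (f : A → L) (b : A) :
    0 < cnt f (f b) := by
  apply Finset.card_pos.2 ⟨b, by simp⟩

lemma cnt_update_self {A L : Type*} [Fintype A] [DecidableEq A] [DecidableEq L]
    (f : A → L) (b : A) (ℓ' : L) (h : f b ≠ ℓ') :
    cnt (Function.update f b ℓ') ℓ' = cnt f ℓ' + 1 := by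
  unfold cnt
  have : (Finset.univ.filter (fun a => Function.update f b ℓ' a = ℓ')) =
      insert b (Finset.univ.filter (fun a => f a = ℓ')) := by
    ext a
    by_cases hab : a = b <;> simp [hab, Function.update, h, Ne.symm h]
  rw [this, Finset.card_insert_of_notMem (by simp [h])]

lemma cnt_update_old {A L : Type*} [Fintype A] [DecidableEq A] [DecidableEq L]
    (f : A → L) (b : A) (ℓ' : L) (h : f b ≠ ℓ') :
    cnt (Function.update f b ℓ') (f b) + 1 = cnt f (f b) := by
  unfold cnt
  have : (Finset.univ.filter (fun a => Function.update f b ℓ' a = f b)) =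
      (Finset.univ.filter (fun a => f a = f b)).erase b := by
    ext a
    by_cases hab : a = b <;> simp [hab, Function.update, h, Ne.symm h]
  rw [this, Finset.card_erase_add_one (by simp)]

lemma cnt_update_other {A L : Type*} [Fintype A] [DecidableEq A] [DecidableEq L]
    (f : A → L) (b : A) (ℓ' ℓ : L) (h1 : ℓ ≠ ℓ') (h2 : ℓ ≠ f b) :
    cnt (Function.update f b ℓ') ℓ = cnt f ℓ := by
  unfold cnt
  congr 1
  ext a
  by_cases hab : a = b <;> simp [hab, Function.update, Ne.symm h1, Ne.symm h2]

/-- for a fixed miller profile `t`, any feasible baker profile maximizing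
the potential `Φ_t` is a baker equilibrium. -/
theorem pot_maximizer_baker_eq {L B M : Type*} [Fintype L] [Fintype B] [Fintype M]
    [DecidableEq L]
    (feas : B → Finset L) (t : M → L) (sstar : B → L)
    (hfeas : ∀ b, sstar b ∈ feas b)
    (hmax : ∀ x : B → L, (∀ b, x b ∈ feas b) → pot t x ≤ pot t sstar) :
    ∀ b : B, ∀ ℓ' ∈ feas b,
      ¬ ((cnt t (sstar b) : ℚ) / (cnt sstar (sstar b) : ℚ) <
          (cnt t ℓ' : ℚ) / ((cnt sstar ℓ' : ℚ) + 1)) := by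
  classical
  intro b ℓ' hℓ' hlt
  by_cases heq : sstar b = ℓ'
  · -- same location: M/k < M/(k+1) with k ≥ 1, M ≥ 0 is impossible
    subst heq
    have hk : (0:ℚ) < (cnt sstar (sstar b) : ℚ) := by
      exact_mod_cast cnt_self_pos sstar b
    have : (cnt t (sstar b) : ℚ) / ((cnt sstar (sstar b) : ℚ) + 1) ≤
        (cnt t (sstar b) : ℚ) / (cnt sstar (sstar b) : ℚ) :=
      div_le_div_of_nonneg_left (by positivity) hk (by linarith)
    linarith
  · set x := Function.update sstar b ℓ' with hx
    have hxfeas : ∀ c, x c ∈ feas c := by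
      intro c
      by_cases hc : c = b
      · subst hc; simpa [hx] using hℓ'
      · simpa [hx, Function.update_of_ne hc] using hfeas c
    -- counts
    obtain ⟨m, hm⟩ : ∃ m, cnt sstar (sstar b) = m + 1 :=
      ⟨cnt sstar (sstar b) - 1, (Nat.succ_pred_eq_of_pos (cnt_self_pos sstar b)).symm⟩
    have h1 : cnt x ℓ' = cnt sstar ℓ' + 1 := cnt_update_self sstar b ℓ' heq
    have h2 : cnt x (sstar b) = m := by
      have h3 := cnt_update_old sstar b ℓ' heq
      rw [hx]; omega
    -- potential difference
    have hdiff : pot t x - pot t sstar =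
        (cnt t ℓ' : ℚ) / ((cnt sstar ℓ' : ℚ) + 1) -
        (cnt t (sstar b) : ℚ) / (cnt sstar (sstar b) : ℚ) := by
      have hsplit : pot t x - pot t sstar =
          ∑ ℓ : L, ((cnt t ℓ : ℚ) * harmonic (cnt x ℓ) -
            (cnt t ℓ : ℚ) * harmonic (cnt sstar ℓ)) := by
        unfold pot; rw [Finset.sum_sub_distrib]
      rw [hsplit]
      rw [← Finset.sum_subset (Finset.subset_univ ({ℓ', sstar b} : Finset L))
        (by
          intro ℓ _ hℓ
          simp only [Finset.mem_insert, Finset.mem_singleton, not_or] at hℓ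
          rw [cnt_update_other sstar b ℓ' ℓ hℓ.1 hℓ.2]
          ring)]
      rw [Finset.sum_pair (Ne.symm heq)]
      rw [h1, h2, hm, harmonic_succ, harmonic_succ]
      push_cast
      field_simp
      ring
    have hle := hmax x hxfeas
    linarith
end

section
/- Greedy miller insertion yields a miller equilibrium: if millers are placed one at a time, each at a location ℓ maximizing B_s(ℓ)/(current number of millers at ℓ + 1) for a fixed baker profile s, then in the resulting profile no miller can strictly improve by moving to another location. -/
open Finset

/-- greedy sequential miller insertion (each miller `i` placed at a
location maximizing `B_s(ℓ)/(x_ℓ + 1)` where `x_ℓ` counts previously inserted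
millers at `ℓ`) yields a miller equilibrium. -/
theorem greedy_insertion_miller_eq {L B : Type*} [Fintype L] [Fintype B] [DecidableEq L]
    (s : B → L) (n : ℕ) (t : Fin n → L)
    (hgreedy : ∀ i : Fin n, ∀ ℓ : L,
      (cnt s ℓ : ℚ) / (((Finset.univ.filter (fun j : Fin n => j < i ∧ t j = ℓ)).card : ℚ) + 1) ≤
      (cnt s (t i) : ℚ) /
        (((Finset.univ.filter (fun j : Fin n => j < i ∧ t j = t i)).card : ℚ) + 1)) :
    ∀ i : Fin n, ∀ ℓ' : L,
      (cnt s ℓ' : ℚ) / ((cnt t ℓ' : ℚ) + 1) ≤ (cnt s (t i) : ℚ) / (cnt t (t i) : ℚ) := by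
  intro i ℓ'
  -- the set of millers at location t i
  set S : Finset (Fin n) := Finset.univ.filter (fun j => t j = t i) with hS
  have hiS : i ∈ S := by simp [hS]
  have hSne : S.Nonempty := ⟨i, hiS⟩
  set k : Fin n := S.max' hSne with hk
  have hkS : k ∈ S := S.max'_mem hSne
  have htk : t k = t i := by simpa [hS] using hkS
  -- counting fact at t i
  have hcount : (Finset.univ.filter (fun j : Fin n => j < k ∧ t j = t i)).card + 1
      = cnt t (t i) := by
    have hset : S = insert k (Finset.univ.filter (fun j : Fin n => j < k ∧ t j = t i)) := by
      ext j
      simp only [hS, Finset.mem_insert, Finset.mem_filter, Finset.mem_univ, true_and]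
      constructor
      · intro hj
        rcases eq_or_lt_of_le (S.le_max' j (by simp [hS, hj])) with h | h
        · exact Or.inl h
        · exact Or.inr ⟨h, hj⟩
      · rintro (rfl | ⟨_, hj⟩)
        · exact htk
        · exact hj
    have hnot : k ∉ Finset.univ.filter (fun j : Fin n => j < k ∧ t j = t i) := by
      simp
    have := Finset.card_insert_of_notMem hnot
    rw [← hset] at this
    unfold cnt
    rw [hS] at this
    omega
  -- previous count at ℓ' is at most final count
  have hle : (Finset.univ.filter (fun j : Fin n => j < k ∧ t j = ℓ')).card ≤ cnt t ℓ' := by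
    apply Finset.card_le_card
    intro j hj
    simp only [Finset.mem_filter, Finset.mem_univ, true_and, cnt] at hj ⊢
    exact hj.2
  have h1 : (cnt s ℓ' : ℚ) / ((cnt t ℓ' : ℚ) + 1)
      ≤ (cnt s ℓ' : ℚ) / (((Finset.univ.filter (fun j : Fin n => j < k ∧ t j = ℓ')).card : ℚ) + 1) := by
    apply div_le_div_of_nonneg_left (by positivity) (by positivity)
    exact_mod_cast Nat.add_le_add_right hle 1
  have h2 := hgreedy k ℓ'
  rw [htk] at h2
  have h3 : (((Finset.univ.filter (fun j : Fin n => j < k ∧ t j = t i)).card : ℚ) + 1)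
      = (cnt t (t i) : ℚ) := by exact_mod_cast congrArg Nat.cast hcount
  rw [h3] at h2
  exact h1.trans h2
end

section
/- Every instance of the Bakers and Millers Game with restricted baker locations admits a pure Nash equilibrium. -/
open Finset

/-- Utility of baker `b`: millers at her location over bakers at her location. -/
def bakerUtil {L B M : Type*} [Fintype B] [Fintype M] [DecidableEq L]
    (s : B → L) (t : M → L) (b : B) : ℚ :=
  (cnt t (s b) : ℚ) / (cnt s (s b) : ℚ)

/-- Utility of miller `m`: bakers at her location over millers at her location. -/
def millerUtil {L B M : Type*} [Fintype B] [Fintype M] [DecidableEq L]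
    (s : B → L) (t : M → L) (m : M) : ℚ :=
  (cnt s (t m) : ℚ) / (cnt t (t m) : ℚ)

/-- Pure Nash equilibrium: no baker can strictly improve by a unilateral deviation
to a feasible location, and no miller can strictly improve by a unilateral
deviation to any location. -/
def isNE {L B M : Type*} [Fintype B] [Fintype M] [DecidableEq L] [DecidableEq B] [DecidableEq M]
    (feas : B → Finset L) (s : B → L) (t : M → L) : Prop :=
  (∀ b : B, ∀ ℓ' ∈ feas b,
    bakerUtil (Function.update s b ℓ') t b ≤ bakerUtil s t b) ∧
  (∀ m : M, ∀ ℓ' : L,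
    millerUtil s (Function.update t m ℓ') m ≤ millerUtil s t m)

/-!
The function `Φ(s, t) = ∏ ℓ, choose (β ℓ + μ ℓ) (β ℓ)`, with `β`, `μ` the numbers of bakers and
millers at each location, is an ordinal potential. Indeed,
`choose (c + 1 + d) (c + 1) * (c + 1) = choose (c + d) c * (c + 1 + d)` shows that `Φ = Φ₋ₐ · (1 + uₐ)` for every agent `a`, where `uₐ` is her
utility and `Φ₋ₐ`, computed without `a`, does not depend on where `a` stands. So a profile that
maximises `Φ` over the finitely many feasible profiles is a pure Nash equilibrium.
-/

section Potential

variable {L : Type*} [Fintype L]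

def binomPot (c d : L → ℕ) : ℕ :=
  ∏ ℓ, (c ℓ + d ℓ).choose (c ℓ)

lemma binomPot_pos (c d : L → ℕ) : 0 < binomPot c d :=
  Finset.prod_pos fun _ _ => Nat.choose_pos (Nat.le_add_right _ _)

lemma binomPot_comm (c d : L → ℕ) : binomPot c d = binomPot d c :=
  Finset.prod_congr rfl fun ℓ _ => by rw [Nat.choose_symm_add, add_comm]

lemma binomPot_add_single_mul [DecidableEq L] (c d : L → ℕ) (l : L) :
    binomPot (c + Pi.single l 1) d * (c l + 1) = binomPot c d * (c l + d l + 1) := by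
  have hrest : ∏ ℓ ∈ {l}ᶜ,
        (c ℓ + (Pi.single l 1 : L → ℕ) ℓ + d ℓ).choose (c ℓ + (Pi.single l 1 : L → ℕ) ℓ)
      = ∏ ℓ ∈ {l}ᶜ, (c ℓ + d ℓ).choose (c ℓ) :=
    Finset.prod_congr rfl fun ℓ hℓ => by
      rw [Pi.single_eq_of_ne (Finset.notMem_singleton.1 (Finset.mem_compl.1 hℓ)), add_zero]
  have hl : (c l + 1 + d l).choose (c l + 1) * (c l + 1)
      = (c l + d l).choose (c l) * (c l + d l + 1) := by
    rw [add_right_comm, ← Nat.add_one_mul_choose_eq, mul_comm]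
  unfold binomPot
  simp only [Pi.add_apply]
  rw [Fintype.prod_eq_mul_prod_compl l, Fintype.prod_eq_mul_prod_compl l, hrest,
    Pi.single_eq_same, mul_right_comm, hl]
  ring

end Potential

section Deviation

variable {A L : Type*} [Fintype A] [DecidableEq A] [DecidableEq L]

def cntErase (f : A → L) (a : A) (ℓ : L) : ℕ :=
  ((Finset.univ.erase a).filter (fun x => f x = ℓ)).card

lemma cnt_eq_cntErase_add_single (f : A → L) (a : A) :
    cnt f = cntErase f a + Pi.single (f a) 1 := by
  funext ℓ
  rw [Pi.add_apply, cnt, cntErase, Finset.card_filter, Finset.card_filter,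
    ← Finset.add_sum_erase _ _ (Finset.mem_univ a), Pi.single_apply, add_comm]
  simp only [eq_comm]

lemma cntErase_update (f : A → L) (a : A) (l : L) :
    cntErase (Function.update f a l) a = cntErase f a := by
  funext ℓ
  unfold cntErase
  congr 1
  refine Finset.filter_congr fun x hx => ?_
  rw [Function.update_of_ne (Finset.ne_of_mem_erase hx)]

/-- The utility of agent `a` when her side plays `f` and the other side's location counts are `d`:
`bakerUtil s t = payoff s (cnt t)` and `millerUtil s t = payoff t (cnt s)` hold by `rfl`. -/
def payoff (f : A → L) (d : L → ℕ) (a : A) : ℚ :=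
  (d (f a) : ℚ) / (cnt f (f a) : ℚ)

variable [Fintype L]

lemma binomPot_cnt_eq (f : A → L) (d : L → ℕ) (a : A) :
    (binomPot (cnt f) d : ℚ) = binomPot (cntErase f a) d * (1 + payoff f d a) := by
  have hcnt := cnt_eq_cntErase_add_single f a
  have hself : cnt f (f a) = cntErase f a (f a) + 1 := by
    rw [hcnt, Pi.add_apply, Pi.single_eq_same]
  have hpot : (binomPot (cnt f) d : ℚ) * (cntErase f a (f a) + 1)
      = binomPot (cntErase f a) d * (cntErase f a (f a) + d (f a) + 1) := by
    rw [hcnt]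
    exact_mod_cast binomPot_add_single_mul (cntErase f a) d (f a)
  rw [payoff, hself]
  push_cast
  field_simp
  linear_combination hpot

lemma payoff_update_le_of_binomPot_le (f : A → L) (d : L → ℕ) (a : A) (l : L)
    (h : binomPot (cnt (Function.update f a l)) d ≤ binomPot (cnt f) d) :
    payoff (Function.update f a l) d a ≤ payoff f d a := by
  have hnew := binomPot_cnt_eq (Function.update f a l) d a
  rw [cntErase_update] at hnew
  have hold := binomPot_cnt_eq f d a
  have hpos : (0 : ℚ) < binomPot (cntErase f a) d := by exact_mod_cast binomPot_pos _ _
  have h' : (binomPot (cnt (Function.update f a l)) d : ℚ) ≤ binomPot (cnt f) d := by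
    exact_mod_cast h
  rw [hnew, hold] at h'
  linarith [le_of_mul_le_mul_left h' hpos]

end Deviation

/-- every instance of the Bakers and Millers Game with restricted baker
locations admits a pure Nash equilibrium. -/
theorem exists_pure_nash {L B M : Type*} [Fintype L] [Fintype B] [Fintype M]
    [DecidableEq L] [DecidableEq B] [DecidableEq M] [Nonempty L]
    (feas : B → Finset L) (hfeas : ∀ b, (feas b).Nonempty) :
    ∃ (s : B → L) (t : M → L), (∀ b, s b ∈ feas b) ∧ isNE feas s t := by
  obtain ⟨⟨s, t⟩, hst, hmax⟩ :=
    (Fintype.piFinset feas ×ˢ (Finset.univ : Finset (M → L))).exists_max_image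
      (fun p => binomPot (cnt p.1) (cnt p.2))
      ((Fintype.piFinset_nonempty.2 hfeas).product Finset.univ_nonempty)
  have hs : ∀ b, s b ∈ feas b := Fintype.mem_piFinset.1 (Finset.mem_product.1 hst).1
  refine ⟨s, t, hs, fun b l hl => ?_, fun m l => ?_⟩
  · have hfeas' : ∀ c, Function.update s b l c ∈ feas c :=
      (Function.forall_update_iff s (p := fun c l => l ∈ feas c)).2 ⟨hl, fun c _ => hs c⟩
    exact payoff_update_le_of_binomPot_le s (cnt t) b l
      (hmax (Function.update s b l, t) (Finset.mem_product.2
        ⟨Fintype.mem_piFinset.2 hfeas', Finset.mem_univ _⟩))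
  · have hmax' := hmax (s, Function.update t m l)
      (Finset.mem_product.2 ⟨Fintype.mem_piFinset.2 hs, Finset.mem_univ _⟩)
    rw [binomPot_comm (cnt s), binomPot_comm (cnt s)] at hmax'
    exact payoff_update_le_of_binomPot_le t (cnt s) m l hmax'
end

section
/- For every n ≥ 1 there is an instance of the Bakers and Millers Game with n bakers and one miller possessing a pure Nash equilibrium of coverage 1 and a strategy profile of coverage n; hence the price of anarchy is at least |B|. -/
open Finset

/-- Coverage: the number of bakers sharing a location with at least one miller. -/
def coverage {L B M : Type*} [Fintype B] [Fintype M] [DecidableEq L]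
    (s : B → L) (t : M → L) : ℕ :=
  (Finset.univ.filter (fun b : B => 0 < cnt t (s b))).card

lemma cnt_fin1 {n : ℕ} (f : Fin 1 → Option (Fin n)) (ℓ : Option (Fin n)) :
    cnt f ℓ = if f 0 = ℓ then 1 else 0 := by
  simp [cnt, Finset.univ_unique, Finset.filter_singleton]
  split <;> simp

lemma cnt_some {n : ℕ} (j : Fin n) :
    cnt (fun b : Fin n => (some b : Option (Fin n))) (some j) = 1 := by
  simp only [cnt, Option.some_inj]
  rw [Finset.filter_eq']
  simp

lemma cnt_some_none {n : ℕ} :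
    cnt (fun b : Fin n => (some b : Option (Fin n))) none = 0 := by
  simp [cnt]

/-- for every `n ≥ 1` there is an instance (locations `x, ℓ_1, …, ℓ_n`,
bakers `b_i` with feasible set `{ℓ_i, x}`, one miller) having a pure Nash equilibrium
of coverage `1` and a feasible strategy profile of coverage `n`; hence PoA ≥ |B|. -/
theorem poa_lower_bound (n : ℕ) (hn : 1 ≤ n) :
    (∃ (s : Fin n → Option (Fin n)) (t : Fin 1 → Option (Fin n)),
      (∀ b, s b ∈ ({some b, none} : Finset (Option (Fin n)))) ∧
      isNE (fun b : Fin n => ({some b, none} : Finset (Option (Fin n)))) s t ∧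
      coverage s t = 1) ∧
    (∃ (s' : Fin n → Option (Fin n)) (t' : Fin 1 → Option (Fin n)),
      (∀ b, s' b ∈ ({some b, none} : Finset (Option (Fin n)))) ∧
      coverage s' t' = n) := by
  have z : Fin n := ⟨0, hn⟩
  refine ⟨⟨fun b => some b, fun _ => some ⟨0, hn⟩, ?_, ⟨?_, ?_⟩, ?_⟩,
    ⟨fun _ => none, fun _ => none, ?_, ?_⟩⟩
  · intro b; simp
  · -- bakers
    intro b ℓ' hℓ'
    simp only [Finset.mem_insert, Finset.mem_singleton] at hℓ'
    rcases hℓ' with rfl | rfl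
    · have : Function.update (fun b : Fin n => (some b : Option (Fin n))) b (some b)
          = fun b : Fin n => (some b : Option (Fin n)) := by
        funext a
        by_cases h : a = b <;> simp [Function.update, h]
      rw [this]
    · have hub : Function.update (fun b : Fin n => (some b : Option (Fin n))) b none b = none := by
        simp
      have h0 : bakerUtil (Function.update (fun b : Fin n => (some b : Option (Fin n))) b none)
          (fun _ : Fin 1 => (some ⟨0, hn⟩ : Option (Fin n))) b = 0 := by
        rw [bakerUtil, hub]
        rw [cnt_fin1]
        simp
      rw [h0]
      apply div_nonneg <;> positivity
  · -- miller
    intro m ℓ'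
    have hm : m = 0 := Subsingleton.elim m 0
    subst hm
    have hcur : millerUtil (fun b : Fin n => (some b : Option (Fin n)))
        (fun _ : Fin 1 => (some ⟨0, hn⟩ : Option (Fin n))) 0 = 1 := by
      rw [millerUtil, cnt_some, cnt_fin1]
      simp
    rw [hcur, millerUtil]
    have hupd : Function.update (fun _ : Fin 1 => (some ⟨0, hn⟩ : Option (Fin n))) 0 ℓ' 0 = ℓ' := by
      simp
    rw [hupd, cnt_fin1, hupd]
    simp only [if_pos rfl]
    cases ℓ' with
    | none => rw [cnt_some_none]; norm_num
    | some j => rw [cnt_some]; norm_num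
  · -- coverage = 1
    rw [coverage]
    have : ∀ b : Fin n, (0 < cnt (fun _ : Fin 1 => (some ⟨0, hn⟩ : Option (Fin n))) (some b))
        ↔ b = ⟨0, hn⟩ := by
      intro b
      rw [cnt_fin1]
      by_cases h : b = (⟨0, hn⟩ : Fin n) <;> simp [h]
      exact fun h' => h h'.symm
    simp only [this]
    rw [Finset.filter_eq']
    simp
  · intro b; simp
  · -- coverage = n
    rw [coverage]
    have : ∀ b : Fin n, 0 < cnt (fun _ : Fin 1 => (none : Option (Fin n))) ((fun _ : Fin n => (none : Option (Fin n))) b) := by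
      intro b
      rw [cnt_fin1]
      simp
    rw [Finset.filter_true_of_mem (fun b _ => this b)]
    simp
end

section
/- In the instance where bakers b_1,…,b_n each have feasible set {ℓ_i, x} and there is one miller, the profile with baker b_i at ℓ_i and the miller at ℓ_1 is a pure Nash equilibrium with coverage 1. -/
open Finset

lemma cnt_id (n : ℕ) (j : Fin n) :
    cnt (fun b : Fin n => (some b : Option (Fin n))) (some j) = 1 := by
  simp [cnt, Finset.filter_eq']

lemma cnt_id_none (n : ℕ) :
    cnt (fun b : Fin n => (some b : Option (Fin n))) none = 0 := by
  simp [cnt]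

lemma cnt_id_le (n : ℕ) (ℓ : Option (Fin n)) :
    cnt (fun b : Fin n => (some b : Option (Fin n))) ℓ ≤ 1 := by
  cases ℓ with
  | none => simp [cnt_id_none]
  | some j => simp [cnt_id]

lemma cnt_const (n : ℕ) (ℓ : Option (Fin n)) :
    cnt (fun _ : Fin 1 => ℓ) ℓ = 1 := by
  simp [cnt]

/-- in the instance with locations `x, ℓ_1, …, ℓ_n` (here `none` plays
the role of `x` and `some i` of `ℓ_i`), bakers `b_i` with feasible set `{ℓ_i, x}` and
one miller, the profile with baker `b_i` at `ℓ_i` and the miller at `ℓ_1` is a pure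
Nash equilibrium with coverage `1`. -/

theorem concrete_bad_ne (n : ℕ) (hn : 2 ≤ n) :
    isNE (fun b : Fin n => ({some b, none} : Finset (Option (Fin n))))
      (fun b : Fin n => some b)
      (fun _ : Fin 1 => some (⟨0, by omega⟩ : Fin n)) ∧
    coverage (fun b : Fin n => some b)
      (fun _ : Fin 1 => some (⟨0, by omega⟩ : Fin n)) = 1 := by
  have z : Fin n := ⟨0, by omega⟩
  have hupd : ∀ (t : Fin 1 → Option (Fin n)) (m : Fin 1) (ℓ' : Option (Fin n)),
      Function.update t m ℓ' = fun _ => ℓ' := by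
    intro t m ℓ'
    funext i
    rw [Subsingleton.elim i m, Function.update_self]
  refine ⟨⟨?_, ?_⟩, ?_⟩
  · intro b ℓ' hℓ'
    simp only [Finset.mem_insert, Finset.mem_singleton] at hℓ'
    rcases hℓ' with h | h
    · subst h
      have : Function.update (fun b : Fin n => (some b : Option (Fin n))) b (some b)
          = fun b : Fin n => (some b : Option (Fin n)) := by
        simp
      rw [this]
    · subst h
      have h1 : bakerUtil (Function.update (fun b : Fin n => (some b : Option (Fin n))) b none)
          (fun _ : Fin 1 => (some ⟨0, by omega⟩ : Option (Fin n))) b = 0 := by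
        have : cnt (fun _ : Fin 1 => (some (⟨0, by omega⟩ : Fin n) : Option (Fin n)))
            (none : Option (Fin n)) = 0 := by simp [cnt]
        simp [bakerUtil, this]
      rw [h1]
      unfold bakerUtil
      positivity
  · intro m ℓ'
    rw [hupd]
    have hcur : millerUtil (fun b : Fin n => (some b : Option (Fin n)))
        (fun _ : Fin 1 => (some (⟨0, by omega⟩ : Fin n) : Option (Fin n))) m = 1 := by
      simp [millerUtil, cnt_id, cnt_const]
    rw [hcur]
    unfold millerUtil
    simp only [cnt_const, Nat.cast_one, div_one]
    exact_mod_cast cnt_id_le n ℓ'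
  · unfold coverage
    have hc : ∀ b : Fin n, cnt (fun _ : Fin 1 => (some (⟨0, by omega⟩ : Fin n) : Option (Fin n)))
        (some b) = if b = ⟨0, by omega⟩ then 1 else 0 := by
      intro b
      by_cases h : b = ⟨0, by omega⟩ <;> simp [cnt, h] <;> omega
    have : (Finset.univ.filter (fun b : Fin n =>
        0 < cnt (fun _ : Fin 1 => (some (⟨0, by omega⟩ : Fin n) : Option (Fin n))) (some b)))
        = {(⟨0, by omega⟩ : Fin n)} := by
      ext b
      simp [hc b]
      split <;> simp_all
    rw [this, Finset.card_singleton]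
end

section
/- The price of stability of the Bakers and Millers Game is at most 1 + (min(|L|,|M|) − 1)/|M|: every instance admits a pure Nash equilibrium whose coverage is at least W(OPT)·|M|/(|M| + min(|L|,|M|) − 1), where W(OPT) is the maximum coverage over all strategy profiles. -/
open Finset

set_option linter.unusedSectionVars false

namespace BMAux

variable {L : Type*} [DecidableEq L]

section cntlemmas

variable {A : Type*} [Fintype A] [DecidableEq A]

lemma cnt_pos (f : A → L) (a : A) : 0 < cnt f (f a) := by
  apply Finset.card_pos.mpr ⟨a, by simp [cnt]⟩

lemma cnt_pos' {f : A → L} {ℓ : L} {a : A} (h : f a = ℓ) : 0 < cnt f ℓ := by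
  apply Finset.card_pos.mpr ⟨a, by simp [cnt, h]⟩

lemma cnt_zero_iff {f : A → L} {ℓ : L} : cnt f ℓ = 0 ↔ ∀ a, f a ≠ ℓ := by
  simp [cnt, Finset.filter_eq_empty_iff, Finset.card_eq_zero]

lemma cnt_update_of_ne (f : A → L) (a : A) (y ℓ : L) (h1 : ℓ ≠ f a) (h2 : ℓ ≠ y) :
    cnt (Function.update f a y) ℓ = cnt f ℓ := by
  unfold cnt
  congr 1
  apply Finset.filter_congr
  intro x _
  by_cases hx : x = a
  · subst hx
    simp [Function.update_self, h1.symm, h2.symm]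
  · simp [Function.update_of_ne hx]

lemma cnt_update_tgt (f : A → L) (a : A) (y : L) (h : f a ≠ y) :
    cnt (Function.update f a y) y = cnt f y + 1 := by
  unfold cnt
  have hset : Finset.univ.filter (fun x => Function.update f a y x = y)
      = insert a (Finset.univ.filter (fun x => f x = y)) := by
    ext x
    by_cases hx : x = a
    · subst hx; simp [Function.update_self]
    · simp [Function.update_of_ne hx, hx]
  rw [hset, Finset.card_insert_of_notMem (by simp [h])]

lemma cnt_update_src (f : A → L) (a : A) (y : L) (h : f a ≠ y) :
    cnt f (f a) = cnt (Function.update f a y) (f a) + 1 := by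
  unfold cnt
  have hset : Finset.univ.filter (fun x => f x = f a)
      = insert a (Finset.univ.filter (fun x => Function.update f a y x = f a)) := by
    ext x
    by_cases hx : x = a
    · subst hx; simp [Function.update_self]
    · simp [Function.update_of_ne hx, hx]
  rw [hset, Finset.card_insert_of_notMem]
  intro hy
  rw [Finset.mem_filter] at hy
  exact h (by simpa using hy.2.symm)

lemma sum_cnt (f : A → L) (C : Finset L) :
    ∑ ℓ ∈ C, cnt f ℓ = (Finset.univ.filter (fun a => f a ∈ C)).card := by
  rw [Finset.card_eq_sum_card_fiberwise (f := f) (t := C) (by intro x hx; exact (Finset.mem_filter.mp hx).2)]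
  apply Finset.sum_congr rfl
  intro ℓ hℓ
  unfold cnt
  congr 1
  rw [Finset.filter_filter]
  apply Finset.filter_congr
  intro x _
  constructor
  · exact fun h => ⟨by rw [h]; exact hℓ, h⟩
  · exact fun h => h.2

lemma sum_cnt_univ [Fintype L] (f : A → L) :
    ∑ ℓ : L, cnt f ℓ = Fintype.card A := by
  rw [sum_cnt]
  rw [Finset.filter_true_of_mem (fun x _ => Finset.mem_univ (f x))]
  exact Finset.card_univ

lemma cnt_le_card [Fintype L] (f : A → L) (ℓ : L) : cnt f ℓ ≤ Fintype.card A := by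
  unfold cnt
  calc (Finset.univ.filter (fun a => f a = ℓ)).card ≤ (Finset.univ : Finset A).card :=
        Finset.card_le_card (Finset.filter_subset _ _)
    _ = Fintype.card A := Finset.card_univ

end cntlemmas

lemma id1 (c m : ℕ) : (c+1+m).choose m * (c+1) = (c+m).choose m * (c+1+m) := by
  have h := Nat.add_one_mul_choose_eq (c+m) c
  have e1 : (c+m).choose c = (c+m).choose m := by
    rw [← Nat.choose_symm (Nat.le_add_left m c)]
    congr 1
    omega
  have e2 : (c+m+1).choose (c+1) = (c+m+1).choose m := by
    have := Nat.choose_symm (by omega : m ≤ c+m+1)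
    rw [show c+m+1-m = c+1 by omega] at this
    exact this
  rw [e1, e2] at h
  rw [show c+1+m = c+m+1 by omega]
  calc (c+m+1).choose m * (c+1) = (c+m+1) * (c+m).choose m := h.symm
    _ = (c+m).choose m * (c+m+1) := mul_comm _ _

lemma id2 (b m : ℕ) : (b+(m+1)).choose (m+1) * (m+1) = (b+m).choose m * (b+m+1) := by
  have h := Nat.add_one_mul_choose_eq (b+m) m
  rw [show b+(m+1) = b+m+1 by omega]
  calc (b+m+1).choose (m+1) * (m+1) = (b+m+1) * (b+m).choose m := h.symm
    _ = (b+m).choose m * (b+m+1) := mul_comm _ _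

section phi

variable {B M : Type*} [Fintype B] [Fintype M] [Fintype L] [DecidableEq B] [DecidableEq M]

/-- The potential function: product over locations of C(bakers+millers, millers). -/
def phi (s : B → L) (t : M → L) : ℕ :=
  ∏ ℓ : L, (cnt s ℓ + cnt t ℓ).choose (cnt t ℓ)

lemma phi_pos (s : B → L) (t : M → L) : 0 < phi s t := by
  apply Finset.prod_pos
  intro ℓ _
  exact Nat.choose_pos (Nat.le_add_left _ _)

lemma phi_congr {s s' : B → L} (t : M → L)
    (h : ∀ ℓ, 0 < cnt t ℓ → cnt s' ℓ = cnt s ℓ) : phi s' t = phi s t := by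
  apply Finset.prod_congr rfl
  intro ℓ _
  rcases Nat.eq_zero_or_pos (cnt t ℓ) with h0 | hpos
  · rw [h0]
    simp
  · rw [h ℓ hpos]

lemma prod_split (g : L → ℕ) {x y : L} (hxy : x ≠ y) :
    ∏ ℓ : L, g ℓ = g x * (g y * ∏ ℓ ∈ (Finset.univ.erase x).erase y, g ℓ) := by
  rw [Finset.mul_prod_erase (Finset.univ.erase x) g
      (Finset.mem_erase.mpr ⟨hxy.symm, Finset.mem_univ y⟩),
    Finset.mul_prod_erase Finset.univ g (Finset.mem_univ x)]

lemma phi_baker_move (s : B → L) (t : M → L) (a : B) (y : L) (h : s a ≠ y) :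
    phi (Function.update s a y) t * ((cnt s (s a) + cnt t (s a)) * (cnt s y + 1))
      = phi s t * (cnt s (s a) * (cnt s y + cnt t y + 1)) := by
  set x := s a with hxdef
  set s' := Function.update s a y with hs'
  have hx : cnt s x = cnt s' x + 1 := cnt_update_src s a y h
  have hy : cnt s' y = cnt s y + 1 := cnt_update_tgt s a y h
  have hoth : ∀ ℓ, ℓ ≠ x → ℓ ≠ y → cnt s' ℓ = cnt s ℓ := fun ℓ h1 h2 =>
    cnt_update_of_ne s a y ℓ h1 h2
  set c := cnt s' x with hc
  set by_ := cnt s y with hby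
  set mx := cnt t x with hmx
  set my := cnt t y with hmy
  have hR : ∏ ℓ ∈ (Finset.univ.erase x).erase y, (cnt s' ℓ + cnt t ℓ).choose (cnt t ℓ)
      = ∏ ℓ ∈ (Finset.univ.erase x).erase y, (cnt s ℓ + cnt t ℓ).choose (cnt t ℓ) := by
    apply Finset.prod_congr rfl
    intro ℓ hℓ
    rw [Finset.mem_erase, Finset.mem_erase] at hℓ
    rw [hoth ℓ hℓ.2.1 hℓ.1]
  set R := ∏ ℓ ∈ (Finset.univ.erase x).erase y, (cnt s ℓ + cnt t ℓ).choose (cnt t ℓ) with hRdef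
  have e1 : phi s' t = (c + mx).choose mx * (((by_ + 1) + my).choose my * R) := by
    rw [phi, prod_split _ h, hR, hy]
  have e2 : phi s t = ((c+1) + mx).choose mx * ((by_ + my).choose my * R) := by
    rw [phi, prod_split _ h, hx]
  rw [e1, e2, hx]
  have h1 := id1 c mx
  have h2 := id1 by_ my
  calc (c + mx).choose mx * ((by_ + 1 + my).choose my * R) * ((c + 1 + mx) * (by_ + 1))
      = R * (((c+mx).choose mx * (c+1+mx)) * ((by_+1+my).choose my * (by_+1))) := by ring
    _ = R * (((c+1+mx).choose mx * (c+1)) * ((by_+my).choose my * (by_+my+1))) := by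
        rw [← h1, h2]; ring
    _ = (c+1+mx).choose mx * ((by_+my).choose my * R) * ((c+1) * (by_+my+1)) := by ring

lemma phi_miller_move (s : B → L) (t : M → L) (μ : M) (y : L) (h : t μ ≠ y) :
    phi s (Function.update t μ y) * ((cnt s (t μ) + cnt t (t μ)) * (cnt t y + 1))
      = phi s t * (cnt t (t μ) * (cnt s y + cnt t y + 1)) := by
  set x := t μ with hxdef
  set t' := Function.update t μ y with ht'
  have hx : cnt t x = cnt t' x + 1 := cnt_update_src t μ y h
  have hy : cnt t' y = cnt t y + 1 := cnt_update_tgt t μ y h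
  have hoth : ∀ ℓ, ℓ ≠ x → ℓ ≠ y → cnt t' ℓ = cnt t ℓ := fun ℓ h1 h2 =>
    cnt_update_of_ne t μ y ℓ h1 h2
  set c := cnt t' x with hc
  set bx := cnt s x with hbx
  set byy := cnt s y with hby
  set my := cnt t y with hmy
  have hR : ∏ ℓ ∈ (Finset.univ.erase x).erase y, (cnt s ℓ + cnt t' ℓ).choose (cnt t' ℓ)
      = ∏ ℓ ∈ (Finset.univ.erase x).erase y, (cnt s ℓ + cnt t ℓ).choose (cnt t ℓ) := by
    apply Finset.prod_congr rfl
    intro ℓ hℓ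
    rw [Finset.mem_erase, Finset.mem_erase] at hℓ
    rw [hoth ℓ hℓ.2.1 hℓ.1]
  set R := ∏ ℓ ∈ (Finset.univ.erase x).erase y, (cnt s ℓ + cnt t ℓ).choose (cnt t ℓ) with hRdef
  have e1 : phi s t' = (bx + c).choose c * ((byy + (my+1)).choose (my+1) * R) := by
    rw [phi, prod_split _ h, hR, hy]
  have e2 : phi s t = (bx + (c+1)).choose (c+1) * ((byy + my).choose my * R) := by
    rw [phi, prod_split _ h, hx]
  rw [e1, e2, hx]
  have h1 := id2 bx c
  have h2 := id2 byy my
  calc (bx + c).choose c * ((byy + (my+1)).choose (my+1) * R) * ((bx + (c + 1)) * (my + 1))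
      = R * (((bx+c).choose c * (bx+c+1)) * ((byy+(my+1)).choose (my+1) * (my+1))) := by ring
    _ = R * (((bx+(c+1)).choose (c+1) * (c+1)) * ((byy+my).choose my * (byy+my+1))) := by
        rw [← h1, h2, show bx+(c+1) = bx+c+1 by omega]
    _ = (bx+(c+1)).choose (c+1) * ((byy+my).choose my * R) * ((c+1) * (byy+my+1)) := by ring

lemma coverage_bd (s : B → L) (t : M → L) : coverage s t ≤ Fintype.card B := by
  unfold coverage
  calc (Finset.univ.filter _).card ≤ (Finset.univ : Finset B).card :=
        Finset.card_le_card (Finset.filter_subset _ _)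
    _ = Fintype.card B := Finset.card_univ

end phi

section lex

lemma lex_lt_fst {K a1 a2 b1 b2 c1 c2 : ℕ} (hb1 : b1 < K) (hc1 : c1 < K) (h : a1 < a2) :
    (a1*K+b1)*K + c1 < (a2*K+b2)*K + c2 := by
  have h2 : (b1+1)*K ≤ K*K := Nat.mul_le_mul_right K (by omega)
  have h3 : a1*(K*K) + K*K ≤ a2*(K*K) := by
    calc a1*(K*K) + K*K = (a1+1)*(K*K) := by ring
      _ ≤ a2*(K*K) := Nat.mul_le_mul_right _ (by omega)
  calc (a1*K+b1)*K + c1 = a1*(K*K) + (b1*K + c1) := by ring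
    _ < a1*(K*K) + K*K := by nlinarith
    _ ≤ a2*(K*K) := h3
    _ ≤ a2*(K*K) + (b2*K + c2) := Nat.le_add_right _ _
    _ = (a2*K+b2)*K + c2 := by ring

lemma lex_lt_snd {K a b1 b2 c1 c2 : ℕ} (hc1 : c1 < K) (h : b1 < b2) :
    (a*K+b1)*K + c1 < (a*K+b2)*K + c2 := by
  have h2 : (b1+1)*K ≤ b2*K := Nat.mul_le_mul_right K (by omega)
  calc (a*K+b1)*K + c1 = a*(K*K) + (b1*K + c1) := by ring
    _ < a*(K*K) + ((b1+1)*K) := by nlinarith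
    _ ≤ a*(K*K) + b2*K := by omega
    _ ≤ a*(K*K) + (b2*K + c2) := by omega
    _ = (a*K+b2)*K + c2 := by ring

lemma lex_lt_trd {K a b c1 c2 : ℕ} (h : c1 < c2) :
    (a*K+b)*K + c1 < (a*K+b)*K + c2 := by omega

lemma lex_le_fst {K a1 a2 b1 b2 c1 c2 : ℕ} (hb2 : b2 < K) (hc2 : c2 < K)
    (h : (a1*K+b1)*K + c1 ≤ (a2*K+b2)*K + c2) : a1 ≤ a2 := by
  by_contra h'
  push_neg at h'
  exact absurd h (not_le.mpr (lex_lt_fst hb2 hc2 h'))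

lemma phi_gt_aux {P Q A Bb : ℕ} (hP : 0 < P) (hAB : A < Bb)
    (h : Q * A = P * Bb) : P < Q := by
  have h1 : P * A < Q * A := by
    rw [h]
    exact Nat.mul_lt_mul_of_le_of_lt (le_refl P) hAB hP
  exact lt_of_mul_lt_mul_right h1 (Nat.zero_le A)

lemma phi_le_aux {P Q A Bb : ℕ} (hP : 0 < P) (hQP : Q ≤ P) (h : Q * A = P * Bb) : Bb ≤ A := by
  have h1 : P * Bb ≤ P * A := by
    rw [← h]
    exact Nat.mul_le_mul_right A hQP
  exact Nat.le_of_mul_le_mul_left h1 hP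

section util

variable {B M : Type*} [Fintype B] [Fintype M] [Fintype L] [DecidableEq B] [DecidableEq M]

lemma bakerUtil_update_ne (s : B → L) (t : M → L) (b : B) (y : L) (h : s b ≠ y) :
    bakerUtil (Function.update s b y) t b = (cnt t y : ℚ) / ((cnt s y : ℚ) + 1) := by
  unfold bakerUtil
  rw [Function.update_self, cnt_update_tgt s b y h]
  norm_cast

lemma millerUtil_update_ne (s : B → L) (t : M → L) (μ : M) (y : L) (h : t μ ≠ y) :
    millerUtil s (Function.update t μ y) μ = (cnt s y : ℚ) / ((cnt t y : ℚ) + 1) := by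
  unfold millerUtil
  rw [Function.update_self, cnt_update_tgt t μ y h]
  norm_cast

end util

end lex

end BMAux

set_option maxHeartbeats 1000000 in
/-- every instance admits a pure Nash equilibrium whose coverage is at
least `W(OPT) · |M| / (|M| + min(|L|,|M|) − 1)`, i.e. PoS ≤ 1 + (min(|L|,|M|)−1)/|M|. -/
theorem pos_upper_bound {L B M : Type*} [Fintype L] [Fintype B] [Fintype M]
    [DecidableEq L] [DecidableEq B] [DecidableEq M] [Nonempty L]
    (feas : B → Finset L) (hfeas : ∀ b, (feas b).Nonempty) :
    ∃ (s : B → L) (t : M → L), (∀ b, s b ∈ feas b) ∧ isNE feas s t ∧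
      ∀ (s' : B → L) (t' : M → L), (∀ b, s' b ∈ feas b) →
        coverage s' t' * Fintype.card M ≤
          coverage s t * (Fintype.card M + (min (Fintype.card L) (Fintype.card M) - 1)) := by
  classical
  by_cases hM0 : Fintype.card M = 0
  · -- no millers: any feasible profile is a NE, and the bound is trivial
    have hME : IsEmpty M := Fintype.card_eq_zero_iff.mp hM0
    have hcnt0 : ∀ (t : M → L) (ℓ : L), cnt t ℓ = 0 := by
      intro t ℓ
      unfold cnt
      rw [Finset.univ_eq_empty, Finset.filter_empty, Finset.card_empty]
    refine ⟨fun b => (hfeas b).choose, fun μ => isEmptyElim μ, fun b => (hfeas b).choose_spec,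
      ⟨?_, ?_⟩, ?_⟩
    · intro b ℓ' _
      unfold bakerUtil
      rw [hcnt0, hcnt0]
      simp
    · intro μ
      exact isEmptyElim μ
    · intro s' t' _
      rw [hM0, Nat.mul_zero]
      exact Nat.zero_le _
  · have hnpos : 0 < Fintype.card M := Nat.pos_of_ne_zero hM0
    obtain ⟨μ0⟩ : Nonempty M := Fintype.card_pos_iff.mp hnpos
    have hLpos : 0 < Fintype.card L := Fintype.card_pos
    set k := min (Fintype.card L) (Fintype.card M) with hk
    have hkpos : 0 < k := lt_min hLpos hnpos
    have hkL : k ≤ Fintype.card L := min_le_left _ _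
    -- the optimal size-k location set
    set covD : Finset L → ℕ :=
      fun D => (Finset.univ.filter (fun b : B => (feas b ∩ D).Nonempty)).card with hcovD
    have hPne : ((Finset.univ : Finset L).powersetCard k).Nonempty := by
      rw [Finset.powersetCard_nonempty, Finset.card_univ]
      exact hkL
    obtain ⟨Dstar, hDmem, hDmax⟩ := Finset.exists_max_image _ covD hPne
    have hDcard : Dstar.card = k := (Finset.mem_powersetCard.mp hDmem).2
    have hDne : Dstar.Nonempty := Finset.card_pos.mp (by rw [hDcard]; exact hkpos)
    -- the objective
    set KK := Fintype.card B + 1 with hKK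
    set Gf : (B → L) → ℕ := fun s => (Finset.univ.filter (fun b => s b ∈ Dstar)).card with hGf
    set FF : ((B → L) × (M → L)) → ℕ :=
      fun p => (BMAux.phi p.1 p.2 * KK + coverage p.1 p.2) * KK + Gf p.1 with hFF
    set SS := Finset.univ.filter
      (fun p : (B → L) × (M → L) => (∀ b, p.1 b ∈ feas b) ∧ (∀ μ, p.2 μ ∈ Dstar)) with hSS
    have hmemSS : ∀ (s1 : B → L) (t1 : M → L), (∀ b, s1 b ∈ feas b) → (∀ μ, t1 μ ∈ Dstar) →
        (s1, t1) ∈ SS := by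
      intro s1 t1 h1 h2
      rw [hSS, Finset.mem_filter]
      exact ⟨Finset.mem_univ _, h1, h2⟩
    have hSSne : SS.Nonempty :=
      ⟨(fun b => (hfeas b).choose, fun _ => hDne.choose),
        hmemSS _ _ (fun b => (hfeas b).choose_spec) (fun _ => hDne.choose_spec)⟩
    obtain ⟨p, hpSS, hpmax⟩ := Finset.exists_max_image SS FF hSSne
    have hpGood := (Finset.mem_filter.mp hpSS).2
    obtain ⟨hfeasp, hmill⟩ := hpGood
    set s := p.1 with hs
    set t := p.2 with ht
    -- lex bounds
    have hcovK : ∀ (s1 : B → L) (t1 : M → L), coverage s1 t1 < KK := by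
      intro s1 t1
      rw [hKK]
      exact Nat.lt_succ_of_le (BMAux.coverage_bd s1 t1)
    have hGK : ∀ s1 : B → L, Gf s1 < KK := by
      intro s1
      rw [hKK, hGf]
      exact Nat.lt_succ_of_le (le_trans (Finset.card_le_card (Finset.filter_subset _ _))
        (le_of_eq Finset.card_univ))
    have hFFp : FF p = (BMAux.phi s t * KK + coverage s t) * KK + Gf s := rfl
    have hphimax : ∀ q ∈ SS, BMAux.phi q.1 q.2 ≤ BMAux.phi s t := by
      intro q hq
      exact BMAux.lex_le_fst (hcovK s t) (hGK s) (hpmax q hq)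
    have hcontra_phi : ∀ q ∈ SS, BMAux.phi s t < BMAux.phi q.1 q.2 → False := by
      intro q hq hlt
      exact absurd (hpmax q hq) (not_le.mpr (BMAux.lex_lt_fst (hcovK s t) (hGK s) hlt))
    have hcontra_G : ∀ q ∈ SS, BMAux.phi q.1 q.2 = BMAux.phi s t →
        coverage q.1 q.2 = coverage s t → Gf s < Gf q.1 → False := by
      intro q hq h1 h2 h3
      have : FF p < FF q := by
        rw [hFFp, hFF]
        dsimp only
        rw [h1, h2]
        exact BMAux.lex_lt_trd h3
      exact absurd (hpmax q hq) (not_le.mpr this)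
    -- milled set
    set C := Finset.univ.filter (fun ℓ : L => 0 < cnt t ℓ) with hC
    have hmillC : ∀ μ : M, t μ ∈ C := fun μ =>
      Finset.mem_filter.mpr ⟨Finset.mem_univ _, BMAux.cnt_pos t μ⟩
    have hCmem : ∀ ℓ : L, ℓ ∈ C ↔ 0 < cnt t ℓ := by
      intro ℓ
      rw [hC, Finset.mem_filter]
      simp
    have hCD : C ⊆ Dstar := by
      intro ℓ hℓ
      obtain ⟨μ, hμ⟩ := Finset.card_pos.mp ((hCmem ℓ).mp hℓ)
      have := (Finset.mem_filter.mp hμ).2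
      exact this ▸ hmill μ
    have hCne : C.Nonempty := ⟨t μ0, hmillC μ0⟩
    have hcnt0 : ∀ ℓ, ℓ ∉ C → cnt t ℓ = 0 := by
      intro ℓ h
      by_contra h'
      exact h ((hCmem ℓ).mpr (Nat.pos_of_ne_zero h'))
    -- fact G1 : every baker who can reach a milled location is covered
    have hG1 : ∀ b : B, (feas b ∩ C).Nonempty → 0 < cnt t (s b) := by
      intro b hne
      by_contra h0
      have h0' : cnt t (s b) = 0 := Nat.eq_zero_of_not_pos h0
      obtain ⟨ℓ2, hℓ2⟩ := hne
      have hf2 := (Finset.mem_inter.mp hℓ2).1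
      have hm2 : 0 < cnt t ℓ2 := (hCmem ℓ2).mp (Finset.mem_inter.mp hℓ2).2
      have hne2 : s b ≠ ℓ2 := by
        intro h
        rw [h] at h0'
        omega
      have hmove := BMAux.phi_baker_move s t b ℓ2 hne2
      rw [h0'] at hmove
      have hbx : 0 < cnt s (s b) := BMAux.cnt_pos s b
      have hlt : BMAux.phi s t < BMAux.phi (Function.update s b ℓ2) t :=
        BMAux.phi_gt_aux (BMAux.phi_pos s t) (by nlinarith) hmove
      have hqSS : (Function.update s b ℓ2, t) ∈ SS := by
        apply hmemSS
        · intro b'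
          by_cases hb' : b' = b
          · subst hb'
            rw [Function.update_self]
            exact hf2
          · rw [Function.update_of_ne hb']
            exact hfeasp b'
        · exact hmill
      exact hcontra_phi _ hqSS hlt
    -- fact G2 : uncovered bakers who can reach Dstar sit inside Dstar
    have hG2 : ∀ b : B, feas b ∩ C = ∅ → (feas b ∩ Dstar).Nonempty → s b ∈ Dstar := by
      intro b hemp hne
      by_contra hsb
      obtain ⟨d, hd⟩ := hne
      have hdf := (Finset.mem_inter.mp hd).1
      have hdD := (Finset.mem_inter.mp hd).2
      have hdC : d ∉ C := by
        intro h
        have : d ∈ feas b ∩ C := Finset.mem_inter.mpr ⟨hdf, h⟩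
        rw [hemp] at this
        exact absurd this (Finset.notMem_empty d)
      have hsbC : s b ∉ C := fun h => hsb (hCD h)
      have hne2 : s b ≠ d := fun h => hsb (h ▸ hdD)
      have hphiq : BMAux.phi (Function.update s b d) t = BMAux.phi s t := by
        apply BMAux.phi_congr
        intro ℓ hℓ
        have hℓC : ℓ ∈ C := (hCmem ℓ).mpr hℓ
        apply BMAux.cnt_update_of_ne
        · intro h
          exact hsbC (h ▸ hℓC)
        · intro h
          exact hdC (h ▸ hℓC)
      have hcovq : coverage (Function.update s b d) t = coverage s t := by
        unfold coverage
        congr 1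
        apply Finset.filter_congr
        intro b' _
        by_cases hb' : b' = b
        · rw [hb', Function.update_self, hcnt0 d hdC, hcnt0 (s b) hsbC]
        · rw [Function.update_of_ne hb']
      have hGq : Gf s + 1 = Gf (Function.update s b d) := by
        rw [hGf]
        dsimp only
        have hset : Finset.univ.filter (fun b' => Function.update s b d b' ∈ Dstar)
            = insert b (Finset.univ.filter (fun b' => s b' ∈ Dstar)) := by
          ext x
          by_cases hx : x = b
          · subst hx
            simp [Function.update_self, hdD]
          · simp [Function.update_of_ne hx, hx]
        rw [hset, Finset.card_insert_of_notMem (by simp [hsb])]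
      have hqSS : (Function.update s b d, t) ∈ SS := by
        apply hmemSS
        · intro b'
          by_cases hb' : b' = b
          · subst hb'
            rw [Function.update_self]
            exact hdf
          · rw [Function.update_of_ne hb']
            exact hfeasp b'
        · exact hmill
      have hGlt : Gf s < Gf (Function.update s b d) := by omega
      exact hcontra_G _ hqSS hphiq hcovq hGlt
    -- fact G3
    have hG3 : ∀ d ∈ Dstar, d ∉ C → ∀ x ∈ C,
        cnt t x * (Finset.univ.filter (fun b : B => feas b ∩ C = ∅ ∧ d ∈ feas b)).card
          ≤ cnt s x := by
      intro d hdD hdC x hxC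
      set T := Finset.univ.filter (fun b : B => feas b ∩ C = ∅ ∧ d ∈ feas b) with hT
      set s1 := fun b : B => if feas b ∩ C = ∅ ∧ d ∈ feas b then d else s b with hs1
      have hs1feas : ∀ b, s1 b ∈ feas b := by
        intro b
        rw [hs1]
        dsimp only
        by_cases h : feas b ∩ C = ∅ ∧ d ∈ feas b
        · rw [if_pos h]; exact h.2
        · rw [if_neg h]; exact hfeasp b
      have huncov : ∀ b : B, (feas b ∩ C = ∅ ∧ d ∈ feas b) → s b ∉ C := by
        intro b hb hsbC
        have : s b ∈ feas b ∩ C := Finset.mem_inter.mpr ⟨hfeasp b, hsbC⟩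
        rw [hb.1] at this
        exact absurd this (Finset.notMem_empty _)
      have hmilleq : ∀ ℓ, 0 < cnt t ℓ → cnt s1 ℓ = cnt s ℓ := by
        intro ℓ hℓ
        have hℓC : ℓ ∈ C := (hCmem ℓ).mpr hℓ
        unfold cnt
        congr 1
        apply Finset.filter_congr
        intro b _
        rw [hs1]
        dsimp only
        by_cases hb : feas b ∩ C = ∅ ∧ d ∈ feas b
        · rw [if_pos hb]
          constructor
          · intro h
            exact absurd (h ▸ hℓC) hdC
          · intro h
            exact absurd (h ▸ hℓC) (huncov b hb)
        · rw [if_neg hb]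
      have hphi1 : BMAux.phi s1 t = BMAux.phi s t := BMAux.phi_congr t hmilleq
      have hcov1 : coverage s1 t = coverage s t := by
        unfold coverage
        congr 1
        apply Finset.filter_congr
        intro b _
        rw [hs1]
        dsimp only
        by_cases hb : feas b ∩ C = ∅ ∧ d ∈ feas b
        · rw [if_pos hb, hcnt0 d hdC, hcnt0 (s b) (huncov b hb)]
        · rw [if_neg hb]
      have hcnt1d : cnt s1 d = T.card := by
        unfold cnt
        congr 1
        ext b
        simp only [Finset.mem_filter, Finset.mem_univ, true_and, hT]
        constructor
        · intro h
          by_cases hb : feas b ∩ C = ∅ ∧ d ∈ feas b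
          · exact hb
          · exfalso
            rw [hs1] at h
            dsimp only at h
            rw [if_neg hb] at h
            apply hb
            constructor
            · rw [← Finset.not_nonempty_iff_eq_empty]
              intro hne
              have := hG1 b hne
              rw [h, hcnt0 d hdC] at this
              omega
            · exact h ▸ hfeasp b
        · intro hb
          rw [hs1]
          dsimp only
          rw [if_pos hb]
      obtain ⟨μ, hμx⟩ : ∃ μ, t μ = x := by
        obtain ⟨μ, hμ⟩ := Finset.card_pos.mp ((hCmem x).mp hxC)
        exact ⟨μ, (Finset.mem_filter.mp hμ).2⟩
      have hxd : x ≠ d := fun h => hdC (h ▸ hxC)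
      have hq2SS : (s1, Function.update t μ d) ∈ SS := by
        apply hmemSS _ _ hs1feas
        intro μ'
        by_cases h : μ' = μ
        · subst h
          rw [Function.update_self]
          exact hdD
        · rw [Function.update_of_ne h]
          exact hmill μ'
      have htμd : t μ ≠ d := by rw [hμx]; exact hxd
      have hmove := BMAux.phi_miller_move s1 t μ d htμd
      rw [hμx, hcnt0 d hdC, hcnt1d, hmilleq x ((hCmem x).mp hxC), hphi1] at hmove
      have hle : BMAux.phi s1 (Function.update t μ d) ≤ BMAux.phi s t :=
        hphimax (s1, Function.update t μ d) hq2SS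
      have hfin := BMAux.phi_le_aux (BMAux.phi_pos s t) hle hmove
      nlinarith [hfin]
    -- fact G4 : swap optimality count
    have hG4 : ∀ ℓ', ℓ' ∉ Dstar → ∀ d ∈ Dstar,
        (Finset.univ.filter (fun b : B => feas b ∩ Dstar = ∅ ∧ ℓ' ∈ feas b)).card ≤
        (Finset.univ.filter (fun b : B => feas b ∩ Dstar = {d} ∧ ℓ' ∉ feas b)).card := by
      intro ℓ' hl' d hd
      set Yset := Finset.univ.filter (fun b : B => feas b ∩ Dstar = ∅ ∧ ℓ' ∈ feas b) with hY
      set Eset := Finset.univ.filter (fun b : B => feas b ∩ Dstar = {d} ∧ ℓ' ∉ feas b) with hE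
      set D' := insert ℓ' (Dstar.erase d) with hD'
      have hD'card : D'.card = k := by
        rw [hD', Finset.card_insert_of_notMem (fun h => hl' (Finset.erase_subset _ _ h)),
          Finset.card_erase_of_mem hd, hDcard]
        omega
      have hD'mem : D' ∈ (Finset.univ : Finset L).powersetCard k :=
        Finset.mem_powersetCard.mpr ⟨Finset.subset_univ _, hD'card⟩
      have hle := hDmax D' hD'mem
      set A := Finset.univ.filter (fun b : B => (feas b ∩ Dstar).Nonempty) with hA
      set A' := Finset.univ.filter (fun b : B => (feas b ∩ D').Nonempty) with hA'
      have hEA : Eset ⊆ A := by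
        intro b hb
        have hb' := (Finset.mem_filter.mp hb).2
        refine Finset.mem_filter.mpr ⟨Finset.mem_univ _, ⟨d, ?_⟩⟩
        rw [hb'.1]
        exact Finset.mem_singleton_self d
      have hsub : (A \ Eset) ∪ Yset ⊆ A' := by
        intro b hb
        rcases Finset.mem_union.mp hb with hb | hb
        · obtain ⟨hbA, hbE⟩ := Finset.mem_sdiff.mp hb
          have h1 : (feas b ∩ Dstar).Nonempty := (Finset.mem_filter.mp hbA).2
          by_cases hlf : ℓ' ∈ feas b
          · exact Finset.mem_filter.mpr ⟨Finset.mem_univ _,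
              ⟨ℓ', Finset.mem_inter.mpr ⟨hlf, Finset.mem_insert_self _ _⟩⟩⟩
          · have hne : feas b ∩ Dstar ≠ {d} := by
              intro h
              exact hbE (Finset.mem_filter.mpr ⟨Finset.mem_univ _, h, hlf⟩)
            have hex : ∃ e ∈ feas b ∩ Dstar, e ≠ d := by
              by_contra hcon
              push_neg at hcon
              apply hne
              apply Finset.eq_singleton_iff_unique_mem.mpr
              obtain ⟨e0, he0⟩ := h1
              exact ⟨(hcon e0 he0) ▸ he0, fun x hx => hcon x hx⟩
            obtain ⟨e, he, hed⟩ := hex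
            refine Finset.mem_filter.mpr ⟨Finset.mem_univ _, ⟨e, Finset.mem_inter.mpr
              ⟨(Finset.mem_inter.mp he).1, Finset.mem_insert.mpr (Or.inr
                (Finset.mem_erase.mpr ⟨hed, (Finset.mem_inter.mp he).2⟩))⟩⟩⟩
        · have hbY := (Finset.mem_filter.mp hb).2
          exact Finset.mem_filter.mpr ⟨Finset.mem_univ _,
            ⟨ℓ', Finset.mem_inter.mpr ⟨hbY.2, Finset.mem_insert_self _ _⟩⟩⟩
      have hdisj : Disjoint (A \ Eset) Yset := by
        rw [Finset.disjoint_left]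
        intro b hb hbY
        have h1 : (feas b ∩ Dstar).Nonempty := (Finset.mem_filter.mp (Finset.mem_sdiff.mp hb).1).2
        have h2 : feas b ∩ Dstar = ∅ := (Finset.mem_filter.mp hbY).2.1
        rw [h2] at h1
        exact Finset.not_nonempty_empty h1
      have hcards : (A \ Eset).card + Yset.card ≤ A.card := by
        calc (A \ Eset).card + Yset.card = ((A \ Eset) ∪ Yset).card :=
              (Finset.card_union_of_disjoint hdisj).symm
          _ ≤ A'.card := Finset.card_le_card hsub
          _ ≤ A.card := hle
      have h3 : (A \ Eset).card = A.card - Eset.card := Finset.card_sdiff_of_subset hEA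
      have h4 := Finset.card_le_card hEA
      omega
    -- fact G5 : the key chain inequality for locations outside Dstar
    have hG5 : ∀ ℓ', ℓ' ∉ Dstar → ∀ x ∈ C, cnt s ℓ' * cnt t x ≤ cnt s x := by
      intro ℓ' hl' x hxC
      have hRY : cnt s ℓ' ≤
          (Finset.univ.filter (fun b : B => feas b ∩ Dstar = ∅ ∧ ℓ' ∈ feas b)).card := by
        apply Finset.card_le_card
        intro b hb
        have hbℓ : s b = ℓ' := (Finset.mem_filter.mp hb).2
        have hi : feas b ∩ C = ∅ := by
          rw [← Finset.not_nonempty_iff_eq_empty]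
          intro hne
          have := hG1 b hne
          have : ℓ' ∈ C := (hCmem ℓ').mpr (hbℓ ▸ this)
          exact hl' (hCD this)
        have hii : feas b ∩ Dstar = ∅ := by
          rw [← Finset.not_nonempty_iff_eq_empty]
          intro hne
          exact hl' (hbℓ ▸ hG2 b hi hne)
        exact Finset.mem_filter.mpr ⟨Finset.mem_univ _, hii, hbℓ ▸ hfeasp b⟩
      by_cases hDC : ∃ d ∈ Dstar, d ∉ C
      · obtain ⟨d, hdD, hdC⟩ := hDC
        have hYE := hG4 ℓ' hl' d hdD
        have hET : (Finset.univ.filter (fun b : B => feas b ∩ Dstar = {d} ∧ ℓ' ∉ feas b)).card ≤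
            (Finset.univ.filter (fun b : B => feas b ∩ C = ∅ ∧ d ∈ feas b)).card := by
          apply Finset.card_le_card
          intro b hb
          have hb' := (Finset.mem_filter.mp hb).2
          have h1 : feas b ∩ C = ∅ := by
            rw [← Finset.not_nonempty_iff_eq_empty]
            intro ⟨e, he⟩
            have heD : e ∈ feas b ∩ Dstar := Finset.mem_inter.mpr
              ⟨(Finset.mem_inter.mp he).1, hCD (Finset.mem_inter.mp he).2⟩
            rw [hb'.1] at heD
            have : e = d := Finset.mem_singleton.mp heD
            exact hdC (this ▸ (Finset.mem_inter.mp he).2)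
          have h2 : d ∈ feas b := by
            have : d ∈ feas b ∩ Dstar := by
              rw [hb'.1]
              exact Finset.mem_singleton_self d
            exact (Finset.mem_inter.mp this).1
          exact Finset.mem_filter.mpr ⟨Finset.mem_univ _, h1, h2⟩
        have hTx := hG3 d hdD hdC x hxC
        calc cnt s ℓ' * cnt t x
            ≤ (Finset.univ.filter (fun b : B => feas b ∩ C = ∅ ∧ d ∈ feas b)).card * cnt t x :=
              Nat.mul_le_mul_right _ (le_trans hRY (le_trans hYE hET))
          _ = cnt t x * (Finset.univ.filter (fun b : B => feas b ∩ C = ∅ ∧ d ∈ feas b)).card :=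
              Nat.mul_comm _ _
          _ ≤ cnt s x := hTx
      · -- C = Dstar ; all miller counts are 1
        push_neg at hDC
        have hDCeq : C = Dstar := Finset.Subset.antisymm hCD hDC
        have hkn : k = Fintype.card M := by
          have hss : Dstar ⊂ Finset.univ := Finset.ssubset_univ_iff.mpr (by
            intro h
            exact hl' (h ▸ Finset.mem_univ ℓ'))
          have : Dstar.card < Fintype.card L := by
            have := Finset.card_lt_card hss
            rwa [Finset.card_univ] at this
          rw [hDcard] at this
          rcases le_or_gt (Fintype.card L) (Fintype.card M) with h | h
          · exfalso
            rw [hk] at this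
            omega
          · rw [hk]
            omega
        have hsumt : ∑ ℓ ∈ C, cnt t ℓ = Fintype.card M := by
          rw [BMAux.sum_cnt t C]
          rw [Finset.filter_true_of_mem (fun μ _ => hmillC μ)]
          exact Finset.card_univ
        have hcardC : C.card = Fintype.card M := by
          rw [hDCeq, hDcard, hkn]
        have hone : cnt t x = 1 := by
          by_contra hne1
          have h2 : 2 ≤ cnt t x := by
            have := (hCmem x).mp hxC
            omega
          have : ∑ ℓ ∈ C, (1 : ℕ) < ∑ ℓ ∈ C, cnt t ℓ := by
            apply Finset.sum_lt_sum
            · intro i hi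
              exact (hCmem i).mp hi
            · exact ⟨x, hxC, by omega⟩
          rw [Finset.sum_const, smul_eq_mul, mul_one, hsumt, hcardC] at this
          omega
        have hYE := hG4 ℓ' hl' x (hDCeq ▸ hxC)
        have hEb : (Finset.univ.filter (fun b : B => feas b ∩ Dstar = {x} ∧ ℓ' ∉ feas b)).card ≤
            cnt s x := by
          apply Finset.card_le_card
          intro b hb
          have hb' := (Finset.mem_filter.mp hb).2
          have h1 : (feas b ∩ C).Nonempty := by
            rw [hDCeq, hb'.1]
            exact ⟨x, Finset.mem_singleton_self x⟩
          have h2 := hG1 b h1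
          have h3 : s b ∈ feas b ∩ Dstar := Finset.mem_inter.mpr
            ⟨hfeasp b, hCD ((hCmem (s b)).mpr h2)⟩
          rw [hb'.1] at h3
          exact Finset.mem_filter.mpr ⟨Finset.mem_univ _, Finset.mem_singleton.mp h3⟩
        rw [hone, Nat.mul_one]
        exact le_trans hRY (le_trans hYE hEb)
    have hcntD : ∀ ℓ', ℓ' ∉ Dstar → cnt t ℓ' = 0 := fun ℓ' h =>
      hcnt0 ℓ' (fun hC' => h (hCD hC'))
    refine ⟨s, t, hfeasp, ⟨?_, ?_⟩, ?_⟩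
    · -- baker stability
      intro b ℓ' hℓ'
      by_cases heq : ℓ' = s b
      · rw [heq, Function.update_eq_self]
      · by_contra hdev
        push_neg at hdev
        have hne : s b ≠ ℓ' := fun h => heq h.symm
        rw [BMAux.bakerUtil_update_ne s t b ℓ' hne] at hdev
        have hbU : bakerUtil s t b = (cnt t (s b) : ℚ) / (cnt s (s b) : ℚ) := rfl
        rw [hbU] at hdev
        have hbx0 : 0 < cnt s (s b) := BMAux.cnt_pos s b
        have hbx : (0:ℚ) < (cnt s (s b) : ℚ) := by exact_mod_cast hbx0
        have hy1 : (0:ℚ) < (cnt s ℓ' : ℚ) + 1 := by positivity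
        rw [div_lt_div_iff₀ hbx hy1] at hdev
        have hdevN : cnt t (s b) * (cnt s ℓ' + 1) < cnt t ℓ' * cnt s (s b) := by
          exact_mod_cast hdev
        have hmove := BMAux.phi_baker_move s t b ℓ' hne
        have hlt : BMAux.phi s t < BMAux.phi (Function.update s b ℓ') t :=
          BMAux.phi_gt_aux (BMAux.phi_pos s t) (by nlinarith) hmove
        have hqSS : (Function.update s b ℓ', t) ∈ SS := by
          refine hmemSS _ _ ?_ hmill
          intro b'
          by_cases hb' : b' = b
          · rw [hb', Function.update_self]
            exact hℓ'
          · rw [Function.update_of_ne hb']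
            exact hfeasp b'
        exact hcontra_phi _ hqSS hlt
    · -- miller stability
      intro μ ℓ'
      by_cases heq : ℓ' = t μ
      · rw [heq, Function.update_eq_self]
      · have hne : t μ ≠ ℓ' := fun h => heq h.symm
        by_contra hdev
        push_neg at hdev
        rw [BMAux.millerUtil_update_ne s t μ ℓ' hne] at hdev
        have hmU : millerUtil s t μ = (cnt s (t μ) : ℚ) / (cnt t (t μ) : ℚ) := rfl
        rw [hmU] at hdev
        have hmx0 : 0 < cnt t (t μ) := BMAux.cnt_pos t μ
        have hmx : (0:ℚ) < (cnt t (t μ) : ℚ) := by exact_mod_cast hmx0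
        have hy1 : (0:ℚ) < (cnt t ℓ' : ℚ) + 1 := by positivity
        rw [div_lt_div_iff₀ hmx hy1] at hdev
        have hdevN : cnt s (t μ) * (cnt t ℓ' + 1) < cnt s ℓ' * cnt t (t μ) := by
          exact_mod_cast hdev
        by_cases hin : ℓ' ∈ Dstar
        · have hmove := BMAux.phi_miller_move s t μ ℓ' hne
          have hlt : BMAux.phi s t < BMAux.phi s (Function.update t μ ℓ') :=
            BMAux.phi_gt_aux (BMAux.phi_pos s t) (by nlinarith) hmove
          have hqSS : (s, Function.update t μ ℓ') ∈ SS := by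
            refine hmemSS _ _ hfeasp ?_
            intro μ'
            by_cases hμ' : μ' = μ
            · rw [hμ', Function.update_self]
              exact hin
            · rw [Function.update_of_ne hμ']
              exact hmill μ'
          exact hcontra_phi _ hqSS hlt
        · have h0 : cnt t ℓ' = 0 := hcntD ℓ' hin
          have hchain := hG5 ℓ' hin (t μ) (hmillC μ)
          rw [h0] at hdevN
          omega
    · -- the coverage bound
      intro s' t' hfeas'
      set Tcard : L → ℕ :=
        fun d => (Finset.univ.filter (fun b : B => feas b ∩ C = ∅ ∧ d ∈ feas b)).card with hTcard
      have h1 : coverage s' t' ≤ covD Dstar := by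
        set W := Finset.image t' Finset.univ with hW
        have hWk : W.card ≤ k := by
          rw [hk]
          apply le_min
          · exact le_trans (Finset.card_le_card (Finset.subset_univ W)) (le_of_eq Finset.card_univ)
          · exact le_trans Finset.card_image_le (le_of_eq Finset.card_univ)
        obtain ⟨W', hWW', hW'card⟩ := Finset.exists_superset_card_eq hWk hkL
        have hsub : Finset.univ.filter (fun b : B => 0 < cnt t' (s' b)) ⊆
            Finset.univ.filter (fun b : B => (feas b ∩ W').Nonempty) := by
          intro b hb
          have hb' := (Finset.mem_filter.mp hb).2
          obtain ⟨μ, hμ⟩ := Finset.card_pos.mp hb'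
          have hμ' : t' μ = s' b := (Finset.mem_filter.mp hμ).2
          refine Finset.mem_filter.mpr ⟨Finset.mem_univ _,
            ⟨s' b, Finset.mem_inter.mpr ⟨hfeas' b, ?_⟩⟩⟩
          apply hWW'
          rw [hW, ← hμ']
          exact Finset.mem_image_of_mem t' (Finset.mem_univ μ)
        calc coverage s' t' ≤ (Finset.univ.filter (fun b : B => (feas b ∩ W').Nonempty)).card :=
              Finset.card_le_card hsub
          _ = covD W' := rfl
          _ ≤ covD Dstar := hDmax W' (Finset.mem_powersetCard.mpr ⟨Finset.subset_univ _, hW'card⟩)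
      have hCovSet : (Finset.univ.filter (fun b : B => (feas b ∩ C).Nonempty)).card
          = coverage s t := by
        unfold coverage
        congr 1
        apply Finset.filter_congr
        intro b _
        constructor
        · exact hG1 b
        · intro h
          exact ⟨s b, Finset.mem_inter.mpr ⟨hfeasp b, (hCmem (s b)).mpr h⟩⟩
      have h2 : covD Dstar ≤ coverage s t + ∑ d ∈ Dstar \ C, Tcard d := by
        have hsub : Finset.univ.filter (fun b : B => (feas b ∩ Dstar).Nonempty) ⊆
            (Finset.univ.filter (fun b : B => (feas b ∩ C).Nonempty)) ∪
              (Dstar \ C).biUnion (fun d => Finset.univ.filter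
                (fun b : B => feas b ∩ C = ∅ ∧ d ∈ feas b)) := by
          intro b hb
          have hb' := (Finset.mem_filter.mp hb).2
          by_cases hc : (feas b ∩ C).Nonempty
          · exact Finset.mem_union_left _ (Finset.mem_filter.mpr ⟨Finset.mem_univ _, hc⟩)
          · obtain ⟨e, he⟩ := hb'
            have hemp : feas b ∩ C = ∅ := Finset.not_nonempty_iff_eq_empty.mp hc
            have heC : e ∉ C := by
              intro h
              exact hc ⟨e, Finset.mem_inter.mpr ⟨(Finset.mem_inter.mp he).1, h⟩⟩
            apply Finset.mem_union_right
            apply Finset.mem_biUnion.mpr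
            exact ⟨e, Finset.mem_sdiff.mpr ⟨(Finset.mem_inter.mp he).2, heC⟩,
              Finset.mem_filter.mpr ⟨Finset.mem_univ _, hemp, (Finset.mem_inter.mp he).1⟩⟩
        calc covD Dstar
            ≤ ((Finset.univ.filter (fun b : B => (feas b ∩ C).Nonempty)) ∪
              (Dstar \ C).biUnion (fun d => Finset.univ.filter
                (fun b : B => feas b ∩ C = ∅ ∧ d ∈ feas b))).card := Finset.card_le_card hsub
          _ ≤ (Finset.univ.filter (fun b : B => (feas b ∩ C).Nonempty)).card +
              ((Dstar \ C).biUnion (fun d => Finset.univ.filter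
                (fun b : B => feas b ∩ C = ∅ ∧ d ∈ feas b))).card := Finset.card_union_le _ _
          _ ≤ (Finset.univ.filter (fun b : B => (feas b ∩ C).Nonempty)).card +
              ∑ d ∈ Dstar \ C, Tcard d :=
              Nat.add_le_add_left Finset.card_biUnion_le _
          _ = coverage s t + ∑ d ∈ Dstar \ C, Tcard d := by rw [hCovSet]
      have hsumt : ∑ ℓ ∈ C, cnt t ℓ = Fintype.card M := by
        rw [BMAux.sum_cnt t C, Finset.filter_true_of_mem (fun μ _ => hmillC μ)]
        exact Finset.card_univ
      have hsums : ∑ ℓ ∈ C, cnt s ℓ = coverage s t := by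
        rw [BMAux.sum_cnt s C]
        unfold coverage
        congr 1
        apply Finset.filter_congr
        intro b _
        exact hCmem (s b)
      have h3 : ∀ d ∈ Dstar \ C, Fintype.card M * Tcard d ≤ coverage s t := by
        intro d hd
        obtain ⟨hdD, hdC⟩ := Finset.mem_sdiff.mp hd
        calc Fintype.card M * Tcard d = (∑ ℓ ∈ C, cnt t ℓ) * Tcard d := by rw [hsumt]
          _ = ∑ ℓ ∈ C, cnt t ℓ * Tcard d := Finset.sum_mul _ _ _
          _ ≤ ∑ ℓ ∈ C, cnt s ℓ := Finset.sum_le_sum (fun x hx => hG3 d hdD hdC x hx)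
          _ = coverage s t := hsums
      have h4 : (Dstar \ C).card ≤ k - 1 := by
        rw [Finset.card_sdiff_of_subset hCD, hDcard]
        have : 1 ≤ C.card := Finset.card_pos.mpr hCne
        omega
      calc coverage s' t' * Fintype.card M
          ≤ covD Dstar * Fintype.card M := Nat.mul_le_mul_right _ h1
        _ ≤ (coverage s t + ∑ d ∈ Dstar \ C, Tcard d) * Fintype.card M :=
            Nat.mul_le_mul_right _ h2
        _ = coverage s t * Fintype.card M + ∑ d ∈ Dstar \ C, Fintype.card M * Tcard d := by
            rw [Nat.add_mul, Finset.sum_mul]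
            congr 1
            apply Finset.sum_congr rfl
            intro d _
            ring
        _ ≤ coverage s t * Fintype.card M + ∑ _d ∈ Dstar \ C, coverage s t :=
            Nat.add_le_add_left (Finset.sum_le_sum h3) _
        _ = coverage s t * Fintype.card M + (Dstar \ C).card * coverage s t := by
            rw [Finset.sum_const, smul_eq_mul]
        _ ≤ coverage s t * Fintype.card M + (k - 1) * coverage s t :=
            Nat.add_le_add_left (Nat.mul_le_mul_right _ h4) _
        _ = coverage s t * (Fintype.card M + (k - 1)) := by ring
end

section
/- For every integer n ≥ 1 and numbers of millers |M| and locations |L|, the instance with one location x hosting n|M|+1 bakers restricted to x and each of the other |L|−1 locations hosting n bakers restricted only to that location has a unique pure Nash equilibrium in which all millers are at x, and the ratio W(OPT)/W(NE) equals (|M|n + 1 + n(min(|L|,|M|)−1))/(|M|n + 1). Hence the price of stability is at least 1 + (min(|L|,|M|)−1)/|M|. -/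
open Finset

/-!
Every baker is confined to a single location, so only the millers' incentives matter. A miller
at some `ℓ_j` earns at most the `n` bakers there, whereas moving to `x` earns at least
`(n|M| + 1)/|M| > n`; hence in every equilibrium all millers sit at `x`, and that profile is an
equilibrium because a lone deviator at `ℓ_j` earns exactly `n`. For the optimum, at most
`min(|L|, |M|)` locations can host a miller; one miller at `x` and one at each of
`min(|L|, |M|) - 1` further locations attains this.
-/

lemma Sum.elim_singleton {α β γ : Type*} (f : α → γ) (g : β → γ) (x : α ⊕ β) :
    Sum.elim (fun a => ({f a} : Finset γ)) (fun b => {g b}) x = {Sum.elim f g x} := by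
  cases x <;> rfl

lemma card_filter_option {α : Type*} [Fintype α] (p : Option α → Prop) [DecidablePred p] :
    #{o | p o} = (if p none then 1 else 0) + #{a | p (some a)} := by
  simp only [Finset.card_filter, Fintype.sum_option]

lemma eq_of_forall_mem_feas_eq_singleton {B L : Type*} {feas : B → Finset L} {s s' : B → L}
    (hfeas : ∀ b, feas b = {s b}) (hs' : ∀ b, s' b ∈ feas b) : s' = s :=
  funext fun b => Finset.mem_singleton.1 (hfeas b ▸ hs' b)

section General

variable {L B M : Type*} [Fintype B] [Fintype M] [DecidableEq L]

lemma cnt_pos_iff (f : B → L) (ℓ : L) : 0 < cnt f ℓ ↔ ∃ b, f b = ℓ := by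
  simp [cnt, Finset.card_pos, Finset.Nonempty]

lemma cnt_pos_self (f : B → L) (b : B) : 0 < cnt f (f b) :=
  (cnt_pos_iff f _).2 ⟨b, rfl⟩

lemma cnt_le_card (f : B → L) (ℓ : L) : cnt f ℓ ≤ Fintype.card B :=
  Finset.card_filter_le _ _

lemma cnt_sum_elim {C : Type*} [Fintype C] (f : B → L) (g : C → L) (ℓ : L) :
    cnt (Sum.elim f g) ℓ = cnt f ℓ + cnt g ℓ := by
  simp only [cnt, Finset.card_filter, Fintype.sum_sum_type, Sum.elim_inl, Sum.elim_inr]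
  rfl

lemma cnt_comp_fst {C : Type*} [Fintype C] (f : B → L) (ℓ : L) :
    cnt (fun p : B × C => f p.1) ℓ = cnt f ℓ * Fintype.card C := by
  simp only [cnt, ← Finset.univ_product_univ, Finset.filter_product_left
    (fun b => f b = ℓ), Finset.card_product, Finset.card_univ]

lemma card_filter_cnt_pos_le (t : M → L) [Fintype L] :
    #{ℓ | 0 < cnt t ℓ} ≤ Fintype.card M := by
  have : ({ℓ | 0 < cnt t ℓ} : Finset L) = univ.image t := by
    ext ℓ; simp [cnt_pos_iff]
  rw [this]
  exact Finset.card_image_le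

lemma coverage_sum_elim {C : Type*} [Fintype C] (f : B → L) (g : C → L) (t : M → L) :
    coverage (Sum.elim f g) t = coverage f t + coverage g t := by
  simp only [coverage, Finset.card_filter, Fintype.sum_sum_type, Sum.elim_inl, Sum.elim_inr]
  rfl

lemma coverage_const (ℓ : L) (t : M → L) :
    coverage (fun _ : B => ℓ) t = if 0 < cnt t ℓ then Fintype.card B else 0 := by
  unfold coverage
  split_ifs with h <;> simp [h]

lemma coverage_comp_fst {C : Type*} [Fintype C] (f : B → L) (t : M → L) :
    coverage (fun p : B × C => f p.1) t = coverage f t * Fintype.card C := by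
  simp only [coverage, ← Finset.univ_product_univ, Finset.filter_product_left
    (fun b => 0 < cnt t (f b)), Finset.card_product, Finset.card_univ]

lemma millerUtil_le_cnt (s : B → L) (t : M → L) (m : M) : millerUtil s t m ≤ cnt s (t m) :=
  div_le_self (Nat.cast_nonneg _) (Nat.one_le_cast.2 (cnt_pos_self t m))

lemma cnt_div_card_le_millerUtil_update [DecidableEq M] (s : B → L) (t : M → L) (m : M)
    (ℓ : L) : (cnt s ℓ : ℚ) / Fintype.card M ≤ millerUtil s (Function.update t m ℓ) m := by
  have hpos := cnt_pos_self (Function.update t m ℓ) m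
  rw [millerUtil, Function.update_self] at *
  exact div_le_div_of_nonneg_left (Nat.cast_nonneg _) (Nat.cast_pos.2 hpos)
    (Nat.cast_le.2 (cnt_le_card _ _))

variable [DecidableEq B] [DecidableEq M] {feas : B → Finset L} {s : B → L} {t : M → L}

lemma isNE_iff_of_feas_eq_singleton (hfeas : ∀ b, feas b = {s b}) :
    isNE feas s t ↔ ∀ m ℓ', millerUtil s (Function.update t m ℓ') m ≤ millerUtil s t m := by
  refine and_iff_right_of_imp fun _ b ℓ' hℓ' => ?_
  rw [hfeas, Finset.mem_singleton] at hℓ'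
  rw [hℓ', Function.update_eq_self]

lemma not_isNE_of_cnt_mul_card_lt {m : M} {ℓ : L}
    (h : cnt s (t m) * Fintype.card M < cnt s ℓ) : ¬ isNE feas s t := by
  intro hne
  have hM : (0 : ℚ) < Fintype.card M := Nat.cast_pos.2 (Fintype.card_pos_iff.2 ⟨m⟩)
  have : (cnt s ℓ : ℚ) / Fintype.card M ≤ cnt s (t m) :=
    (cnt_div_card_le_millerUtil_update s t m ℓ).trans
      ((hne.2 m ℓ).trans (millerUtil_le_cnt s t m))
  rw [div_le_iff₀ hM] at this
  exact absurd this (not_le.2 (by exact_mod_cast h))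

lemma isNE_const (hfeas : ∀ b, feas b = {s b}) {ℓ : L}
    (hℓ : ∀ ℓ' ≠ ℓ, cnt s ℓ' * Fintype.card M ≤ cnt s ℓ) : isNE feas s (fun _ : M => ℓ) := by
  refine (isNE_iff_of_feas_eq_singleton hfeas).2 fun m ℓ' => ?_
  rcases eq_or_ne ℓ' ℓ with rfl | hne
  · rw [Function.update_eq_self]
  have hM : (0 : ℚ) < Fintype.card M := Nat.cast_pos.2 (Fintype.card_pos_iff.2 ⟨m⟩)
  calc millerUtil s (Function.update (fun _ => ℓ) m ℓ') m
      ≤ cnt s ℓ' := by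
        simpa using millerUtil_le_cnt s (Function.update (fun _ => ℓ) m ℓ') m
    _ ≤ (cnt s ℓ : ℚ) / Fintype.card M := by
        rw [le_div_iff₀ hM]; exact_mod_cast hℓ ℓ' hne
    _ = millerUtil s (fun _ => ℓ) m := by
        simp [millerUtil, cnt]

end General

section Instance

variable (n k mM : ℕ)

-- `none` is the location `x` and `some j` the location `ℓ_j`.
def homeLoc : Fin (n * mM + 1) ⊕ (Fin k × Fin n) → Option (Fin k) :=
  Sum.elim (fun _ => none) (fun p => some p.1)

lemma cnt_homeLoc_none : cnt (homeLoc n k mM) none = n * mM + 1 := by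
  rw [homeLoc, cnt_sum_elim, cnt_comp_fst]
  simp [cnt]

lemma cnt_homeLoc_some (j : Fin k) : cnt (homeLoc n k mM) (some j) = n := by
  rw [homeLoc, cnt_sum_elim, cnt_comp_fst]
  simp [cnt, Finset.filter_eq']

lemma coverage_homeLoc (t : Fin mM → Option (Fin k)) :
    coverage (homeLoc n k mM) t =
      (if 0 < cnt t none then n * mM + 1 else 0) + #{j | 0 < cnt t (some j)} * n := by
  rw [homeLoc, coverage_sum_elim, coverage_const, coverage_comp_fst]
  simp [coverage]

lemma coverage_homeLoc_le (t : Fin mM → Option (Fin k)) :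
    coverage (homeLoc n k mM) t ≤ n * mM + 1 + n * (min (k + 1) mM - 1) := by
  have hocc := card_filter_cnt_pos_le t
  rw [card_filter_option, Fintype.card_fin] at hocc
  have hk : #{j | 0 < cnt t (some j)} ≤ k :=
    (Finset.card_filter_le _ _).trans_eq (Finset.card_fin k)
  rw [coverage_homeLoc]
  split_ifs at hocc ⊢
  · have := Nat.mul_le_mul_right n
      (show #{j | 0 < cnt t (some j)} ≤ min (k + 1) mM - 1 by omega)
    linarith
  · have := Nat.mul_le_mul_right n hocc
    nlinarith

lemma coverage_homeLoc_const_none (hm : 1 ≤ mM) :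
    coverage (homeLoc n k mM) (fun _ : Fin mM => none) = n * mM + 1 := by
  have hnone : 0 < cnt (fun _ : Fin mM => (none : Option (Fin k))) none :=
    (cnt_pos_iff _ _).2 ⟨⟨0, hm⟩, rfl⟩
  rw [coverage_homeLoc, if_pos hnone]
  simp [cnt]

variable {n k mM} in
lemma forall_eq_none_of_isNE {feas : _ → Finset (Option (Fin k))} {t : Fin mM → Option (Fin k)}
    (hne : isNE feas (homeLoc n k mM) t) (m : Fin mM) : t m = none := by
  by_contra h
  obtain ⟨j, hj⟩ := Option.ne_none_iff_exists'.mp h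
  refine not_isNE_of_cnt_mul_card_lt (m := m) (ℓ := none) ?_ hne
  rw [hj, cnt_homeLoc_some, cnt_homeLoc_none, Fintype.card_fin]
  omega

variable {n k mM} in
lemma isNE_homeLoc_const_none {feas : _ → Finset (Option (Fin k))}
    (hfeas : ∀ b, feas b = {homeLoc n k mM b}) :
    isNE feas (homeLoc n k mM) (fun _ : Fin mM => none) := by
  refine isNE_const hfeas fun ℓ hℓ => ?_
  obtain ⟨j, rfl⟩ := Option.ne_none_iff_exists'.mp hℓ
  rw [cnt_homeLoc_some, cnt_homeLoc_none, Fintype.card_fin]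
  omega

def spreadMillers (m : Fin mM) : Option (Fin k) :=
  if h : (m : ℕ) < k ∧ (m : ℕ) < mM - 1 then some ⟨m, h.1⟩ else none

lemma coverage_homeLoc_spreadMillers (hm : 1 ≤ mM) :
    coverage (homeLoc n k mM) (spreadMillers k mM) = n * mM + 1 + n * (min (k + 1) mM - 1) := by
  have hnone : 0 < cnt (spreadMillers k mM) none :=
    (cnt_pos_iff _ _).2 ⟨⟨mM - 1, by omega⟩, by simp [spreadMillers]⟩
  have hsome (j : Fin k) : 0 < cnt (spreadMillers k mM) (some j) ↔ (j : ℕ) < mM - 1 := by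
    rw [cnt_pos_iff]
    constructor
    · rintro ⟨m, hmj⟩
      unfold spreadMillers at hmj
      split_ifs at hmj with h
      cases hmj
      exact h.2
    · intro hj
      exact ⟨⟨j, by omega⟩, by simp [spreadMillers, hj]⟩
  rw [coverage_homeLoc, if_pos hnone, Finset.filter_congr fun j _ => hsome j,
    Fin.card_filter_val_lt, show min k (mM - 1) = min (k + 1) mM - 1 by omega]
  ring

end Instance

theorem pos_lower_bound_general (n k mM : ℕ) (hm : 1 ≤ mM) :
    (∀ (s : Fin (n * mM + 1) ⊕ (Fin k × Fin n) → Option (Fin k))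
       (t : Fin mM → Option (Fin k)),
      (∀ b, s b ∈ Sum.elim (fun _ => ({none} : Finset (Option (Fin k))))
          (fun p => ({some p.1} : Finset (Option (Fin k)))) b) →
      isNE (Sum.elim (fun _ => ({none} : Finset (Option (Fin k))))
          (fun p => ({some p.1} : Finset (Option (Fin k))))) s t →
      ((∀ m, t m = none) ∧ coverage s t = n * mM + 1)) ∧
    (∃ (s : Fin (n * mM + 1) ⊕ (Fin k × Fin n) → Option (Fin k))
       (t : Fin mM → Option (Fin k)),
      (∀ b, s b ∈ Sum.elim (fun _ => ({none} : Finset (Option (Fin k))))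
          (fun p => ({some p.1} : Finset (Option (Fin k)))) b) ∧
      isNE (Sum.elim (fun _ => ({none} : Finset (Option (Fin k))))
          (fun p => ({some p.1} : Finset (Option (Fin k))))) s t ∧
      (∀ m, t m = none)) ∧
    (∀ (s' : Fin (n * mM + 1) ⊕ (Fin k × Fin n) → Option (Fin k))
       (t' : Fin mM → Option (Fin k)),
      (∀ b, s' b ∈ Sum.elim (fun _ => ({none} : Finset (Option (Fin k))))
          (fun p => ({some p.1} : Finset (Option (Fin k)))) b) →
      coverage s' t' ≤ n * mM + 1 + n * (min (k + 1) mM - 1)) ∧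
    (∃ (s' : Fin (n * mM + 1) ⊕ (Fin k × Fin n) → Option (Fin k))
       (t' : Fin mM → Option (Fin k)),
      (∀ b, s' b ∈ Sum.elim (fun _ => ({none} : Finset (Option (Fin k))))
          (fun p => ({some p.1} : Finset (Option (Fin k)))) b) ∧
      coverage s' t' = n * mM + 1 + n * (min (k + 1) mM - 1)) := by
  have hfeas := Sum.elim_singleton (fun _ : Fin (n * mM + 1) => (none : Option (Fin k)))
    (fun p : Fin k × Fin n => some p.1)
  refine ⟨fun s t hs hne => ?_,
    ⟨homeLoc n k mM, fun _ => none, fun b => hfeas b ▸ mem_singleton_self _,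
      isNE_homeLoc_const_none hfeas, fun _ => rfl⟩,
    fun s t hs => ?_,
    ⟨homeLoc n k mM, spreadMillers k mM, fun b => hfeas b ▸ mem_singleton_self _,
      coverage_homeLoc_spreadMillers n k mM hm⟩⟩
  · obtain rfl := eq_of_forall_mem_feas_eq_singleton hfeas hs
    obtain rfl : t = fun _ => none := funext (forall_eq_none_of_isNE hne)
    exact ⟨fun _ => rfl, coverage_homeLoc_const_none n k mM hm⟩
  · rw [eq_of_forall_mem_feas_eq_singleton hfeas hs]
    exact coverage_homeLoc_le n k mM t

/-- in the instance with a location `x` (here `none`) hosting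
`n·|M| + 1` bakers restricted to `x` and `k` further locations `ℓ_j` (here `some j`)
each hosting `n` bakers restricted to `ℓ_j`, every pure Nash equilibrium has all
millers at `x` and coverage `n·|M| + 1` (and such an equilibrium exists), while the
maximum coverage is `n·|M| + 1 + n·(min(|L|,|M|) − 1)` with `|L| = k + 1`; hence
PoS ≥ 1 + (min(|L|,|M|)−1)/|M|. -/
theorem pos_lower_bound (n k mM : ℕ) (hn : 1 ≤ n) (hm : 1 ≤ mM) :
    (∀ (s : Fin (n * mM + 1) ⊕ (Fin k × Fin n) → Option (Fin k))
       (t : Fin mM → Option (Fin k)),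
      (∀ b, s b ∈ Sum.elim (fun _ => ({none} : Finset (Option (Fin k))))
          (fun p => ({some p.1} : Finset (Option (Fin k)))) b) →
      isNE (Sum.elim (fun _ => ({none} : Finset (Option (Fin k))))
          (fun p => ({some p.1} : Finset (Option (Fin k))))) s t →
      ((∀ m, t m = none) ∧ coverage s t = n * mM + 1)) ∧
    (∃ (s : Fin (n * mM + 1) ⊕ (Fin k × Fin n) → Option (Fin k))
       (t : Fin mM → Option (Fin k)),
      (∀ b, s b ∈ Sum.elim (fun _ => ({none} : Finset (Option (Fin k))))
          (fun p => ({some p.1} : Finset (Option (Fin k)))) b) ∧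
      isNE (Sum.elim (fun _ => ({none} : Finset (Option (Fin k))))
          (fun p => ({some p.1} : Finset (Option (Fin k))))) s t ∧
      (∀ m, t m = none)) ∧
    (∀ (s' : Fin (n * mM + 1) ⊕ (Fin k × Fin n) → Option (Fin k))
       (t' : Fin mM → Option (Fin k)),
      (∀ b, s' b ∈ Sum.elim (fun _ => ({none} : Finset (Option (Fin k))))
          (fun p => ({some p.1} : Finset (Option (Fin k)))) b) →
      coverage s' t' ≤ n * mM + 1 + n * (min (k + 1) mM - 1)) ∧
    (∃ (s' : Fin (n * mM + 1) ⊕ (Fin k × Fin n) → Option (Fin k))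
       (t' : Fin mM → Option (Fin k)),
      (∀ b, s' b ∈ Sum.elim (fun _ => ({none} : Finset (Option (Fin k))))
          (fun p => ({some p.1} : Finset (Option (Fin k)))) b) ∧
      coverage s' t' = n * mM + 1 + n * (min (k + 1) mM - 1)) :=
  pos_lower_bound_general n k mM hm
end

section
/- Sequential greedy miller insertion with ties broken toward smaller indices preserves monotonicity: if B_s(ℓ_1) ≥ B_s(ℓ_2) ≥ … ≥ B_s(ℓ_k) and each miller is inserted at the location ℓ (smallest index among maximizers) maximizing B_s(ℓ)/(M_t(ℓ)+1), then the final miller counts satisfy M_t(ℓ_i) ≥ M_t(ℓ_{i+1}) for all i. -/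
open Finset

/-- sequential greedy miller insertion with ties broken toward smaller
indices preserves monotonicity: if baker counts are non-increasing in the location
index, so are the final miller counts. -/
theorem greedy_miller_counts_monotone (K n : ℕ) (bs : Fin K → ℕ)
    (hb : ∀ i j : Fin K, i ≤ j → bs j ≤ bs i)
    (t : Fin n → Fin K)
    (hmax : ∀ i : Fin n, ∀ ℓ : Fin K,
      (bs ℓ : ℚ) / (((Finset.univ.filter (fun j : Fin n => j < i ∧ t j = ℓ)).card : ℚ) + 1) ≤
      (bs (t i) : ℚ) /
        (((Finset.univ.filter (fun j : Fin n => j < i ∧ t j = t i)).card : ℚ) + 1))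
    (htie : ∀ i : Fin n, ∀ ℓ : Fin K,
      (bs ℓ : ℚ) / (((Finset.univ.filter (fun j : Fin n => j < i ∧ t j = ℓ)).card : ℚ) + 1) =
      (bs (t i) : ℚ) /
        (((Finset.univ.filter (fun j : Fin n => j < i ∧ t j = t i)).card : ℚ) + 1) →
      t i ≤ ℓ) :
    ∀ i j : Fin K, i ≤ j → cnt t j ≤ cnt t i := by
  classical
  set c : ℕ → Fin K → ℕ := fun m ℓ =>
    (Finset.univ.filter (fun j : Fin n => (j : ℕ) < m ∧ t j = ℓ)).card with hc
  -- counts before step m equal the filter in hypotheses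
  have hA : ∀ (m : ℕ) (hm : m < n) (ℓ : Fin K),
      (Finset.univ.filter (fun j : Fin n => j < (⟨m, hm⟩ : Fin n) ∧ t j = ℓ)).card = c m ℓ := by
    intro m hm ℓ
    rfl
  have hstep : ∀ (m : ℕ) (hm : m < n) (ℓ : Fin K),
      c (m + 1) ℓ = c m ℓ + (if t ⟨m, hm⟩ = ℓ then 1 else 0) := by
    intro m hm ℓ
    simp only [hc]
    have hsplit : (Finset.univ.filter (fun j : Fin n => (j : ℕ) < m + 1 ∧ t j = ℓ))
        = (Finset.univ.filter (fun j : Fin n => (j : ℕ) < m ∧ t j = ℓ)) ∪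
          (Finset.univ.filter (fun j : Fin n => j = ⟨m, hm⟩ ∧ t j = ℓ)) := by
      ext j
      simp only [Finset.mem_union, Finset.mem_filter, Finset.mem_univ, true_and,
        Nat.lt_succ_iff_lt_or_eq, Fin.ext_iff]
      tauto
    rw [hsplit, Finset.card_union_of_disjoint]
    · congr 1
      by_cases h : t ⟨m, hm⟩ = ℓ
      · rw [if_pos h]
        have : (Finset.univ.filter (fun j : Fin n => j = ⟨m, hm⟩ ∧ t j = ℓ)) = {(⟨m, hm⟩ : Fin n)} := by
          ext j
          simp only [Finset.mem_filter, Finset.mem_univ, true_and, Finset.mem_singleton]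
          constructor
          · rintro ⟨rfl, -⟩; rfl
          · rintro rfl; exact ⟨rfl, h⟩
        rw [this, Finset.card_singleton]
      · rw [if_neg h]
        rw [Finset.card_eq_zero, Finset.filter_eq_empty_iff]
        intro j _
        rintro ⟨rfl, hj⟩
        exact h hj
    · rw [Finset.disjoint_filter]
      rintro j _ ⟨hj, -⟩ ⟨rfl, -⟩
      exact lt_irrefl _ hj
  have hconst : ∀ (m : ℕ), n ≤ m → ∀ ℓ, c m ℓ = c n ℓ := by
    intro m hm ℓ
    simp only [hc]
    congr 1
    apply Finset.filter_congr
    intro j _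
    simp [j.isLt, lt_of_lt_of_le j.isLt hm]
  -- main invariant
  have inv : ∀ m : ℕ, ∀ i j : Fin K, i ≤ j → c m j ≤ c m i := by
    intro m
    induction m with
    | zero => intro i j _; simp [hc]
    | succ m ih =>
      intro i j hij
      by_cases hm : m < n
      · rw [hstep m hm i, hstep m hm j]
        set i0 := t ⟨m, hm⟩ with hi0
        by_cases hji : j = i0
        · by_cases hii : i = i0
          · rw [hii, hji]
          · -- i < i0 = j, new count of j is c m j + 1
            have hilt : i < i0 := lt_of_le_of_ne (hji ▸ hij) hii
            rw [hji, if_pos rfl, if_neg (fun h => hii h.symm)]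
            have hle : c m i0 ≤ c m i := ih i i0 (le_of_lt hilt)
            rcases lt_or_eq_of_le hle with h | h
            · omega
            · exfalso
              -- tie: value at i equals value at i0, so t ⟨m,hm⟩ ≤ i, contradiction
              have h1 := hmax ⟨m, hm⟩ i
              rw [hA m hm i, hA m hm (t ⟨m, hm⟩), ← hi0, ← h] at h1
              have hbs : bs i0 ≤ bs i := hb i i0 (le_of_lt hilt)
              have hpos : (0 : ℚ) ≤ (c m i0 : ℚ) + 1 := by positivity
              have h2 : (bs i0 : ℚ) / ((c m i0 : ℚ) + 1) ≤ (bs i : ℚ) / ((c m i0 : ℚ) + 1) := by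
                apply div_le_div_of_nonneg_right _ hpos
                exact_mod_cast hbs
              have heq : (bs i : ℚ) / ((c m i0 : ℚ) + 1) = (bs i0 : ℚ) / ((c m i0 : ℚ) + 1) :=
                le_antisymm h1 h2
              have h3 := htie ⟨m, hm⟩ i
              rw [hA m hm i, hA m hm (t ⟨m, hm⟩), ← hi0, ← h] at h3
              exact absurd (h3 heq) (not_le.mpr hilt)
        · have : ¬ (i0 = j) := fun h => hji h.symm
          rw [if_neg this]
          have := ih i j hij
          split <;> omega
      · push_neg at hm
        rw [hconst (m+1) (by omega) i, hconst (m+1) (by omega) j,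
          ← hconst m hm i, ← hconst m hm j]
        exact ih i j hij
  intro i j hij
  have hn : ∀ ℓ, cnt t ℓ = c n ℓ := by
    intro ℓ
    simp only [cnt, hc]
    congr 1
    apply Finset.filter_congr
    intro a _
    simp [a.isLt]
  rw [hn i, hn j]
  exact inv n i j hij
end

section
/- In the difference-graph argument: if a baker profile s* maximizes Φ_t(x) = Σ_ℓ M_t(ℓ)·H_{B_x(ℓ)}, then for any maximal path (p_1, …, p_m) in the acyclic multigraph whose arcs record bakers moving from their location in s to their location in s*, it holds that (B_{s*}(p_1)+1)/M_t(p_1) ≥ B_{s*}(p_m)/M_t(p_m). -/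
/-!
Pick one baker for each arc of the path and let `x` send these bakers to their `s`-locations
and every other baker to its `s*`-location. Each interior location of the path loses one baker
and gains one, so `x` differs from `s*` only by one extra baker at `p 0` and one missing baker at
`p m`. Maximality of `s*` then gives `M(p 0) / (B(p 0) + 1) ≤ M(p m) / B(p m)`, which inverts to
the claim.
-/

open Finset

section Counting

variable {A L : Type*} [DecidableEq L]

lemma cnt_eq_sum [Fintype A] (f : A → L) (ℓ : L) : cnt f ℓ = ∑ a, if f a = ℓ then 1 else 0 :=
  card_filter _ _

lemma cnt_piecewise_add_card_filter [Fintype A] [DecidableEq A] (S : Finset A) (f g : A → L)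
    (ℓ : L) : cnt (S.piecewise f g) ℓ + #{a ∈ S | g a = ℓ} = cnt g ℓ + #{a ∈ S | f a = ℓ} := by
  have on_S : ∑ a ∈ S, (if S.piecewise f g a = ℓ then 1 else 0) =
      ∑ a ∈ S, if f a = ℓ then 1 else 0 :=
    sum_congr rfl fun a ha => by rw [S.piecewise_eq_of_mem f g ha]
  have off_S : ∑ a ∈ Sᶜ, (if S.piecewise f g a = ℓ then 1 else 0) =
      ∑ a ∈ Sᶜ, if g a = ℓ then 1 else 0 :=
    sum_congr rfl fun a ha => by rw [S.piecewise_eq_of_notMem f g (mem_compl.1 ha)]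
  simp only [cnt_eq_sum, card_filter, ← sum_add_sum_compl S, on_S, off_S]
  ring

lemma card_filter_image_univ {I : Type*} [Fintype I] [DecidableEq A] {e : I → A}
    (he : Function.Injective e) (f : A → L) (ℓ : L) :
    #{a ∈ univ.image e | f a = ℓ} = cnt (f ∘ e) ℓ := by
  rw [filter_image, card_image_of_injective _ he]
  rfl

lemma cnt_fin_succ {n : ℕ} (f : Fin (n + 1) → L) (ℓ : L) :
    cnt f ℓ = cnt (fun i : Fin n => f i.succ) ℓ + if f 0 = ℓ then 1 else 0 := by
  rw [cnt_eq_sum, cnt_eq_sum, Fin.sum_univ_succ, add_comm]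

lemma cnt_fin_castSucc {n : ℕ} (f : Fin (n + 1) → L) (ℓ : L) :
    cnt f ℓ = cnt (fun i : Fin n => f i.castSucc) ℓ + if f (Fin.last n) = ℓ then 1 else 0 := by
  rw [cnt_eq_sum, cnt_eq_sum, Fin.sum_univ_castSucc]

end Counting

lemma exists_reroute_along_path {B L : Type*} [Fintype B] [DecidableEq L] (s s' : B → L)
    {m : ℕ} {p : Fin (m + 1) → L} (hp : Function.Injective p)
    (harc : ∀ i : Fin m, ∃ b, s b = p i.castSucc ∧ s' b = p i.succ) :
    ∃ x : B → L, (∀ b, x b = s b ∨ x b = s' b) ∧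
      ∀ ℓ, cnt x ℓ + (if p (Fin.last m) = ℓ then 1 else 0) =
        cnt s' ℓ + (if p 0 = ℓ then 1 else 0) := by
  classical
  choose e hs hs' using harc
  have he : Function.Injective e := fun i j hij =>
    Fin.succ_injective _ (hp (by rw [← hs', ← hs', hij]))
  refine ⟨(univ.image e).piecewise s s', fun b => ?_, fun ℓ => ?_⟩
  · by_cases hb : b ∈ univ.image e
    · exact .inl (piecewise_eq_of_mem _ _ _ hb)
    · exact .inr (piecewise_eq_of_notMem _ _ _ hb)
  · have moved := cnt_piecewise_add_card_filter (univ.image e) s s' ℓ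
    rw [card_filter_image_univ he, card_filter_image_univ he,
      show s ∘ e = fun i => p i.castSucc from funext hs,
      show s' ∘ e = fun i => p i.succ from funext hs'] at moved
    have := cnt_fin_succ p ℓ
    have := cnt_fin_castSucc p ℓ
    omega

lemma sum_mul_harmonic_sub_of_move {L : Type*} [Fintype L] [DecidableEq L] (w : L → ℚ)
    {c c' : L → ℕ} {u v : L} (huv : u ≠ v)
    (h : ∀ ℓ, c ℓ + (if v = ℓ then 1 else 0) = c' ℓ + (if u = ℓ then 1 else 0)) :
    ∑ ℓ, w ℓ * harmonic (c ℓ) - ∑ ℓ, w ℓ * harmonic (c' ℓ) = w u / (c' u + 1) - w v / c' v := by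
  have term : ∀ ℓ, w ℓ * harmonic (c ℓ) - w ℓ * harmonic (c' ℓ) =
      (if u = ℓ then w u / (c' u + 1) else 0) - (if v = ℓ then w v / c' v else 0) := by
    intro ℓ
    have hℓ := h ℓ
    by_cases hu : u = ℓ
    · subst hu
      simp only [huv.symm, ↓reduceIte, add_zero] at hℓ ⊢
      rw [hℓ, harmonic_succ]
      push_cast
      ring
    by_cases hv : v = ℓ
    · subst hv
      simp only [huv, ↓reduceIte, add_zero] at hℓ ⊢
      rw [← hℓ, harmonic_succ]
      push_cast
      ring
    simp only [hu, hv, ↓reduceIte, add_zero] at hℓ ⊢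
    rw [hℓ]
    ring
  rw [← sum_sub_distrib, sum_congr rfl fun ℓ _ => term ℓ, sum_sub_distrib, sum_ite_eq,
    sum_ite_eq, if_pos (mem_univ u), if_pos (mem_univ v)]

theorem difference_path_inequality_general {L B M : Type*} [Fintype L] [Fintype B] [Fintype M]
    [DecidableEq L]
    (feas : B → Finset L) (t : M → L) (s sstar : B → L)
    (hs : ∀ b, s b ∈ feas b) (hstar : ∀ b, sstar b ∈ feas b)
    (hmax : ∀ x : B → L, (∀ b, x b ∈ feas b) → pot t x ≤ pot t sstar)
    (m : ℕ) (p : Fin (m + 1) → L) (hinj : Function.Injective p)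
    (hmill : ∀ i, 0 < cnt t (p i))
    (harc : ∀ i : Fin m, ∃ b, s b = p i.castSucc ∧ sstar b = p i.succ) :
    (cnt sstar (p (Fin.last m)) : ℚ) / (cnt t (p (Fin.last m)) : ℚ) ≤
      ((cnt sstar (p 0) : ℚ) + 1) / (cnt t (p 0) : ℚ) := by
  have hM0 : (0 : ℚ) < cnt t (p 0) := by exact_mod_cast hmill 0
  obtain ⟨x, hx, hcnt⟩ := exists_reroute_along_path s sstar hinj harc
  by_cases hends : p (Fin.last m) = p 0
  · rw [hends]
    gcongr
    exact le_add_of_nonneg_right zero_le_one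
  have hfeas : ∀ b, x b ∈ feas b := fun b => (hx b).elim (· ▸ hs b) (· ▸ hstar b)
  have hdiff : pot t x - pot t sstar =
      (cnt t (p 0) : ℚ) / ((cnt sstar (p 0) : ℚ) + 1) -
        (cnt t (p (Fin.last m)) : ℚ) / (cnt sstar (p (Fin.last m)) : ℚ) :=
    sum_mul_harmonic_sub_of_move (fun ℓ => (cnt t ℓ : ℚ)) (Ne.symm hends) hcnt
  have hle : (cnt t (p 0) : ℚ) / ((cnt sstar (p 0) : ℚ) + 1) ≤
      (cnt t (p (Fin.last m)) : ℚ) / (cnt sstar (p (Fin.last m)) : ℚ) := by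
    linarith [hmax x hfeas]
  simpa only [inv_div] using inv_anti₀ (by positivity) hle

/-- difference-graph argument: if `s*` maximizes `Φ_t` among feasible
baker profiles, then along any maximal path `p_0, …, p_m` of the acyclic difference
multigraph (arcs record bakers moving from their location in `s` to their location
in `s*`), one has `(B_{s*}(p_0)+1)/M_t(p_0) ≥ B_{s*}(p_m)/M_t(p_m)`. -/
theorem difference_path_inequality {L B M : Type*} [Fintype L] [Fintype B] [Fintype M]
    [DecidableEq L]
    (feas : B → Finset L) (t : M → L) (s sstar : B → L)
    (hs : ∀ b, s b ∈ feas b) (hstar : ∀ b, sstar b ∈ feas b)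
    (hmax : ∀ x : B → L, (∀ b, x b ∈ feas b) → pot t x ≤ pot t sstar)
    (m : ℕ) (p : Fin (m + 1) → L) (hinj : Function.Injective p)
    (hmill : ∀ i, 0 < cnt t (p i))
    (harc : ∀ i : Fin m, ∃ b, s b = p i.castSucc ∧ sstar b = p i.succ)
    (hstartmax : ∀ b, sstar b = p 0 → s b = p 0)
    (hendmax : ∀ b, s b = p (Fin.last m) → sstar b = p (Fin.last m)) :
    (cnt sstar (p (Fin.last m)) : ℚ) / (cnt t (p (Fin.last m)) : ℚ) ≤
      ((cnt sstar (p 0) : ℚ) + 1) / (cnt t (p 0) : ℚ) :=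
  difference_path_inequality_general feas t s sstar hs hstar hmax m p hinj hmill harc
end
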